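/- arXiv:2004.14009 — 4 statements merged into one kernel-verified Lean document; each statement's English description precedes it below -/
import Mathlib

section
/- Trace consistency when uncorrelated linear combinations are independent (Proposition, parts 2–3): Suppose that for each n, the predictors X_i ∈ ℝ^{p(n)}, i = 1,…,n, are independent with mean zero and common covariance Σ_{X*} whose eigenvalues are bounded above and below by positive constants independent of n and p, that the X_i have sub-Gaussian norms bounded by a constant independent of n and p, that p = p(n) → ∞ with p(n)/n → 0, and that each X_i has the property that for any v₁, v₂ ∈ ℝ^p with v₁ᵀΣ_{X*}v₂ = 0, the random variables v₁ᵀX_i and v₂ᵀX_i are independent (in particular, this holds when X_i is multivariate normal). Then for any ε > 0, P(|tr(S_X − Σ_{X*})| ≥ ε) → 0 as n → ∞, where S_X = n⁻¹ Σ_{i=1}^n X_i X_iᵀ. -/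
open Matrix MeasureTheory ProbabilityTheory Filter
open scoped BigOperators Topology NNReal

noncomputable section

/-- `c ≤ λ_min(M)` for a symmetric matrix `M`, expressed through the quadratic form. -/
def eigLB {d : ℕ} (M : Matrix (Fin d) (Fin d) ℝ) (c : ℝ) : Prop :=
  ∀ v : Fin d → ℝ, c * (∑ i, v i ^ 2) ≤ v ⬝ᵥ (M *ᵥ v)

/-- `λ_max(M) ≤ c` for a symmetric matrix `M`, expressed through the quadratic form. -/
def eigUB {d : ℕ} (M : Matrix (Fin d) (Fin d) ℝ) (c : ℝ) : Prop :=
  ∀ v : Fin d → ℝ, v ⬝ᵥ (M *ᵥ v) ≤ c * (∑ i, v i ^ 2)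

lemma integrable_of_sq {Ω : Type} [MeasurableSpace Ω] {μ : Measure Ω} [IsProbabilityMeasure μ]
    {A : Ω → ℝ} (hm : AEStronglyMeasurable A μ)
    (h2 : Integrable (fun ω => A ω ^ 2) μ) : Integrable A μ := by
  refine Integrable.mono' ((integrable_const 1).add h2) hm ?_
  filter_upwards with ω
  show ‖A ω‖ ≤ 1 + A ω ^ 2
  rw [Real.norm_eq_abs]
  nlinarith [sq_nonneg (1 - |A ω|), sq_abs (A ω), abs_nonneg (A ω)]

lemma integrable_mul_of_sq {Ω : Type} [MeasurableSpace Ω] {μ : Measure Ω} [IsProbabilityMeasure μ]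
    {A B : Ω → ℝ} (hmA : AEStronglyMeasurable A μ) (hmB : AEStronglyMeasurable B μ)
    (hA2 : Integrable (fun ω => A ω ^ 2) μ) (hB2 : Integrable (fun ω => B ω ^ 2) μ) :
    Integrable (fun ω => A ω * B ω) μ := by
  refine Integrable.mono' (hA2.add hB2) (hmA.mul hmB) ?_
  filter_upwards with ω
  show ‖A ω * B ω‖ ≤ A ω ^ 2 + B ω ^ 2
  rw [Real.norm_eq_abs, abs_mul]
  nlinarith [sq_nonneg (|A ω| - |B ω|), sq_abs (A ω), sq_abs (B ω)]

lemma fourth_moment_bound {Ω : Type} [MeasurableSpace Ω] {μ : Measure Ω} [IsProbabilityMeasure μ]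
    {A B : Ω → ℝ} {s : ℝ}
    (hAm : AEStronglyMeasurable A μ) (hBm : AEStronglyMeasurable B μ)
    (hA2 : Integrable (fun ω => A ω ^ 2) μ) (hB2 : Integrable (fun ω => B ω ^ 2) μ)
    (hA0 : ∫ ω, A ω ∂μ = 0) (hB0 : ∫ ω, B ω ∂μ = 0)
    (hAs : ∫ ω, A ω ^ 2 ∂μ = s) (hBs : ∫ ω, B ω ^ 2 ∂μ = s)
    (hAB : IndepFun A B μ)
    (hpm : IndepFun (fun ω => A ω + B ω) (fun ω => A ω - B ω) μ) :
    Integrable (fun ω => A ω ^ 4) μ ∧ ∫ ω, A ω ^ 4 ∂μ ≤ 6 * s ^ 2 := by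
  have hAint : Integrable A μ := integrable_of_sq hAm hA2
  have hBint : Integrable B μ := integrable_of_sq hBm hB2
  -- E[AB] = 0
  have hABint : Integrable (fun ω => A ω * B ω) μ := by
    have := hAB.integrable_mul hAint hBint
    exact this
  have hABmean : ∫ ω, A ω * B ω ∂μ = 0 := by
    have := hAB.integral_fun_mul_eq_mul_integral hAm hBm
    rw [this, hA0, hB0]; ring
  -- (A+B)^2 integrable with integral 2s
  have hsum2 : Integrable (fun ω => (A ω + B ω) ^ 2) μ := by
    have : (fun ω => (A ω + B ω) ^ 2)
        = fun ω => A ω ^ 2 + (2 * (A ω * B ω) + B ω ^ 2) := by funext ω; ring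
    rw [this]
    exact hA2.add ((hABint.const_mul 2).add hB2)
  have hdiff2 : Integrable (fun ω => (A ω - B ω) ^ 2) μ := by
    have : (fun ω => (A ω - B ω) ^ 2)
        = fun ω => A ω ^ 2 + ((-2) * (A ω * B ω) + B ω ^ 2) := by funext ω; ring
    rw [this]
    exact hA2.add ((hABint.const_mul (-2)).add hB2)
  have hsum2int : ∫ ω, (A ω + B ω) ^ 2 ∂μ = 2 * s := by
    have h1 : Integrable (fun ω => A ω ^ 2 + 2 * (A ω * B ω)) μ := hA2.add (hABint.const_mul 2)
    have e : ∫ ω, (A ω + B ω) ^ 2 ∂μ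
        = ∫ ω, ((A ω ^ 2 + 2 * (A ω * B ω)) + B ω ^ 2) ∂μ := by
      congr 1; funext ω; ring
    rw [e, integral_add h1 hB2, integral_add hA2 (hABint.const_mul 2), integral_const_mul,
      hAs, hBs, hABmean]
    ring
  have hdiff2int : ∫ ω, (A ω - B ω) ^ 2 ∂μ = 2 * s := by
    have h1 : Integrable (fun ω => A ω ^ 2 + (-2) * (A ω * B ω)) μ :=
      hA2.add (hABint.const_mul (-2))
    have e : ∫ ω, (A ω - B ω) ^ 2 ∂μ
        = ∫ ω, ((A ω ^ 2 + (-2) * (A ω * B ω)) + B ω ^ 2) ∂μ := by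
      congr 1; funext ω; ring
    rw [e, integral_add h1 hB2, integral_add hA2 (hABint.const_mul (-2)), integral_const_mul,
      hAs, hBs, hABmean]
    ring
  -- independence of squares
  have hpm2 : IndepFun (fun ω => (A ω + B ω) ^ 2) (fun ω => (A ω - B ω) ^ 2) μ := by
    have := hpm.comp (φ := fun x : ℝ => x ^ 2) (ψ := fun x : ℝ => x ^ 2)
      (measurable_id.pow_const 2) (measurable_id.pow_const 2)
    exact this
  have hAB2 : IndepFun (fun ω => A ω ^ 2) (fun ω => B ω ^ 2) μ := by
    have := hAB.comp (φ := fun x : ℝ => x ^ 2) (ψ := fun x : ℝ => x ^ 2)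
      (measurable_id.pow_const 2) (measurable_id.pow_const 2)
    exact this
  -- product integrable, with integral 4 s^2
  have hprodint : Integrable (fun ω => (A ω + B ω) ^ 2 * (A ω - B ω) ^ 2) μ := by
    have := hpm2.integrable_mul hsum2 hdiff2
    exact this
  have hprodmean : ∫ ω, (A ω + B ω) ^ 2 * (A ω - B ω) ^ 2 ∂μ = 4 * s ^ 2 := by
    have := hpm2.integral_fun_mul_eq_mul_integral hsum2.aestronglyMeasurable hdiff2.aestronglyMeasurable
    rw [this, hsum2int, hdiff2int]; ring
  -- A²B² integrable with integral s²
  have hA2B2int : Integrable (fun ω => A ω ^ 2 * B ω ^ 2) μ := by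
    have := hAB2.integrable_mul hA2 hB2
    exact this
  have hA2B2mean : ∫ ω, A ω ^ 2 * B ω ^ 2 ∂μ = s ^ 2 := by
    have := hAB2.integral_fun_mul_eq_mul_integral hA2.aestronglyMeasurable hB2.aestronglyMeasurable
    rw [this, hAs, hBs]; ring
  -- A⁴ + B⁴ integrable, integral 6 s²
  have hkey : (fun ω => A ω ^ 4 + B ω ^ 4)
      = fun ω => (A ω + B ω) ^ 2 * (A ω - B ω) ^ 2 + 2 * (A ω ^ 2 * B ω ^ 2) := by
    funext ω; ring
  have hsum4int : Integrable (fun ω => A ω ^ 4 + B ω ^ 4) μ := by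
    rw [hkey]; exact hprodint.add (hA2B2int.const_mul 2)
  have hsum4mean : ∫ ω, (A ω ^ 4 + B ω ^ 4) ∂μ = 6 * s ^ 2 := by
    rw [hkey, integral_add hprodint (hA2B2int.const_mul 2), integral_const_mul,
      hprodmean, hA2B2mean]
    ring
  have hA4 : Integrable (fun ω => A ω ^ 4) μ := by
    refine Integrable.mono' hsum4int ((hAm.pow 4)) ?_
    filter_upwards with ω
    show ‖A ω ^ 4‖ ≤ A ω ^ 4 + B ω ^ 4
    rw [Real.norm_eq_abs, abs_of_nonneg (by positivity)]
    nlinarith [sq_nonneg (B ω ^ 2)]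
  have hB4 : Integrable (fun ω => B ω ^ 4) μ := by
    refine Integrable.mono' hsum4int ((hBm.pow 4)) ?_
    filter_upwards with ω
    show ‖B ω ^ 4‖ ≤ A ω ^ 4 + B ω ^ 4
    rw [Real.norm_eq_abs, abs_of_nonneg (by positivity)]
    nlinarith [sq_nonneg (A ω ^ 2)]
  refine ⟨hA4, ?_⟩
  have hsplit : ∫ ω, (A ω ^ 4 + B ω ^ 4) ∂μ = ∫ ω, A ω ^ 4 ∂μ + ∫ ω, B ω ^ 4 ∂μ :=
    integral_add hA4 hB4
  have hB4nonneg : 0 ≤ ∫ ω, B ω ^ 4 ∂μ := integral_nonneg fun ω => by positivity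
  linarith [hsum4mean, hsplit]

section dotAux
variable {Ω : Type} [MeasurableSpace Ω] {μ : Measure Ω} [IsProbabilityMeasure μ]
  {d : ℕ} {Y : Ω → Fin d → ℝ} {M : Matrix (Fin d) (Fin d) ℝ}

lemma dot_meas (hY : Measurable Y) (v : Fin d → ℝ) :
    Measurable fun ω => v ⬝ᵥ Y ω := by
  simp only [dotProduct]
  exact Finset.measurable_sum _ fun a _ =>
    (measurable_const.mul ((measurable_pi_apply a).comp hY))

lemma dot_mul_eq_sum (v w : Fin d → ℝ) (y : Fin d → ℝ) :
    (v ⬝ᵥ y) * (w ⬝ᵥ y) = ∑ a, ∑ b, (v a * w b) * (y a * y b) := by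
  simp only [dotProduct, Finset.sum_mul_sum]
  refine Finset.sum_congr rfl fun a _ => Finset.sum_congr rfl fun b _ => by ring

lemma dot_mul_integrable (hY : Measurable Y)
    (hint : ∀ a b, Integrable (fun ω => Y ω a * Y ω b) μ) (v w : Fin d → ℝ) :
    Integrable (fun ω => (v ⬝ᵥ Y ω) * (w ⬝ᵥ Y ω)) μ := by
  have e : (fun ω => (v ⬝ᵥ Y ω) * (w ⬝ᵥ Y ω))
      = fun ω => ∑ a, ∑ b, (v a * w b) * (Y ω a * Y ω b) := by
    funext ω; exact dot_mul_eq_sum v w (Y ω)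
  rw [e]
  exact integrable_finset_sum _ fun a _ =>
    integrable_finset_sum _ fun b _ => (hint a b).const_mul _

lemma dot_mul_integral (hY : Measurable Y)
    (hint : ∀ a b, Integrable (fun ω => Y ω a * Y ω b) μ)
    (hcovv : ∀ a b, ∫ ω, Y ω a * Y ω b ∂μ = M a b) (v w : Fin d → ℝ) :
    ∫ ω, (v ⬝ᵥ Y ω) * (w ⬝ᵥ Y ω) ∂μ = v ⬝ᵥ (M *ᵥ w) := by
  have e : ∫ ω, (v ⬝ᵥ Y ω) * (w ⬝ᵥ Y ω) ∂μ
      = ∫ ω, ∑ a, ∑ b, (v a * w b) * (Y ω a * Y ω b) ∂μ := by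
    congr 1; funext ω; exact dot_mul_eq_sum v w (Y ω)
  rw [e, integral_finset_sum _ fun a _ =>
    (integrable_finset_sum _ fun b _ => (hint a b).const_mul _)]
  have e2 : ∀ a : Fin d, ∫ ω, ∑ b, (v a * w b) * (Y ω a * Y ω b) ∂μ
      = ∑ b, (v a * w b) * M a b := by
    intro a
    rw [integral_finset_sum _ fun b _ => (hint a b).const_mul _]
    refine Finset.sum_congr rfl fun b _ => ?_
    rw [integral_const_mul, hcovv a b]
  simp only [e2, dotProduct, mulVec, dotProduct]
  refine Finset.sum_congr rfl fun a _ => ?_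
  rw [Finset.mul_sum]
  refine Finset.sum_congr rfl fun b _ => by ring

lemma coord_integrable (hY : Measurable Y)
    (hint : ∀ a b, Integrable (fun ω => Y ω a * Y ω b) μ) (a : Fin d) :
    Integrable (fun ω => Y ω a) μ := by
  refine Integrable.mono' ((integrable_const 1).add (hint a a))
    ((measurable_pi_apply a).comp hY).aestronglyMeasurable ?_
  filter_upwards with ω
  show ‖Y ω a‖ ≤ 1 + Y ω a * Y ω a
  rw [Real.norm_eq_abs]
  nlinarith [sq_nonneg (1 - |Y ω a|), sq_abs (Y ω a), abs_nonneg (Y ω a)]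

lemma dot_integrable (hY : Measurable Y)
    (hint : ∀ a b, Integrable (fun ω => Y ω a * Y ω b) μ) (v : Fin d → ℝ) :
    Integrable (fun ω => v ⬝ᵥ Y ω) μ := by
  simp only [dotProduct]
  exact integrable_finset_sum _ fun a _ => (coord_integrable hY hint a).const_mul _

lemma dot_mean (hY : Measurable Y)
    (hint : ∀ a b, Integrable (fun ω => Y ω a * Y ω b) μ)
    (hmeanv : ∀ a, ∫ ω, Y ω a ∂μ = 0) (v : Fin d → ℝ) :
    ∫ ω, v ⬝ᵥ Y ω ∂μ = 0 := by
  simp only [dotProduct]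
  rw [integral_finset_sum _ fun a _ => (coord_integrable hY hint a).const_mul _]
  simp only [integral_const_mul, hmeanv, mul_zero, Finset.sum_const_zero]

end dotAux

section spectral
variable {d : ℕ} {M : Matrix (Fin d) (Fin d) ℝ} (hM : M.IsHermitian)

/-- column orthonormality -/
lemma col_orthonormal (j k : Fin d) :
    (∑ a, (hM.eigenvectorUnitary : Matrix (Fin d) (Fin d) ℝ) a j
      * (hM.eigenvectorUnitary : Matrix (Fin d) (Fin d) ℝ) a k)
      = if j = k then 1 else 0 := by
  set U := (hM.eigenvectorUnitary : Matrix (Fin d) (Fin d) ℝ) with hU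
  have h : star U * U = 1 := Unitary.coe_star_mul_self hM.eigenvectorUnitary
  have := congrFun (congrFun h j) k
  simp only [Matrix.mul_apply, Matrix.star_apply, star_trivial, Matrix.one_apply] at this
  simpa using this

lemma row_orthonormal (a b : Fin d) :
    (∑ j, (hM.eigenvectorUnitary : Matrix (Fin d) (Fin d) ℝ) a j
      * (hM.eigenvectorUnitary : Matrix (Fin d) (Fin d) ℝ) b j)
      = if a = b then 1 else 0 := by
  set U := (hM.eigenvectorUnitary : Matrix (Fin d) (Fin d) ℝ) with hU
  have h : U * star U = 1 := Unitary.coe_mul_star_self hM.eigenvectorUnitary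
  have := congrFun (congrFun h a) b
  simp only [Matrix.mul_apply, Matrix.star_apply, star_trivial, Matrix.one_apply] at this
  simpa using this

lemma entry_spectral (a b : Fin d) :
    M a b = ∑ j, hM.eigenvalues j
      * ((hM.eigenvectorUnitary : Matrix (Fin d) (Fin d) ℝ) a j
        * (hM.eigenvectorUnitary : Matrix (Fin d) (Fin d) ℝ) b j) := by
  set U := (hM.eigenvectorUnitary : Matrix (Fin d) (Fin d) ℝ) with hU
  have h := hM.spectral_theorem
  have := congrFun (congrFun h a) b
  rw [this]
  simp only [Unitary.conjStarAlgAut_apply, Matrix.mul_apply, Matrix.diagonal_apply, Matrix.star_apply, star_trivial,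
    Function.comp_apply, RCLike.ofReal_real_eq_id, id_eq]
  simp only [mul_ite, mul_zero, Finset.sum_ite_eq, Finset.sum_ite_eq', Finset.mem_univ, if_true]
  refine Finset.sum_congr rfl fun j _ => by ring

/-- the quadratic form at two eigen-columns -/
lemma col_quadform (j k : Fin d) :
    (fun a => (hM.eigenvectorUnitary : Matrix (Fin d) (Fin d) ℝ) a j) ⬝ᵥ
      (M *ᵥ fun a => (hM.eigenvectorUnitary : Matrix (Fin d) (Fin d) ℝ) a k)
      = if j = k then hM.eigenvalues j else 0 := by
  set U := (hM.eigenvectorUnitary : Matrix (Fin d) (Fin d) ℝ) with hU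
  have inner : ∀ a, (∑ b, M a b * U b k) = hM.eigenvalues k * U a k := by
    intro a
    have e1 : ∀ b, M a b * U b k
        = ∑ l, hM.eigenvalues l * U a l * (U b l * U b k) := by
      intro b
      rw [entry_spectral hM, Finset.sum_mul]
      exact Finset.sum_congr rfl fun l _ => by ring
    simp only [e1]
    rw [Finset.sum_comm]
    have e2 : ∀ l, (∑ b, hM.eigenvalues l * U a l * (U b l * U b k))
        = hM.eigenvalues l * U a l * (if l = k then 1 else 0) := by
      intro l
      rw [← Finset.mul_sum, col_orthonormal hM l k]
    simp only [e2, mul_ite, mul_one, mul_zero, Finset.sum_ite_eq, Finset.sum_ite_eq',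
      Finset.mem_univ, if_true]
  simp only [dotProduct, mulVec, dotProduct]
  simp only [inner]
  have e3 : (∑ a, U a j * (hM.eigenvalues k * U a k))
      = hM.eigenvalues k * ∑ a, U a j * U a k := by
    rw [Finset.mul_sum]
    exact Finset.sum_congr rfl fun a _ => by ring
  rw [e3, col_orthonormal hM j k]
  by_cases h : j = k <;> simp [h]

/-- trace equals sum of eigenvalues -/
lemma trace_eq_sum_eigs : (∑ a, M a a) = ∑ j, hM.eigenvalues j := by
  set U := (hM.eigenvectorUnitary : Matrix (Fin d) (Fin d) ℝ) with hU
  simp only [entry_spectral hM]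
  rw [Finset.sum_comm]
  refine Finset.sum_congr rfl fun j _ => ?_
  rw [← Finset.mul_sum, col_orthonormal hM j j]
  simp

/-- norm identity -/
lemma norm_sq_eigen (y : Fin d → ℝ) :
    (∑ a, (y a) ^ 2) = ∑ j, ((fun a => (hM.eigenvectorUnitary : Matrix (Fin d) (Fin d) ℝ) a j) ⬝ᵥ y) ^ 2 := by
  set U := (hM.eigenvectorUnitary : Matrix (Fin d) (Fin d) ℝ) with hU
  have e1 : ∀ j, ((fun a => U a j) ⬝ᵥ y) ^ 2 = ∑ a, ∑ b, (U a j * U b j) * (y a * y b) := by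
    intro j
    rw [sq, dotProduct, Finset.sum_mul_sum]
    exact Finset.sum_congr rfl fun a _ => Finset.sum_congr rfl fun b _ => by ring
  simp only [e1]
  rw [Finset.sum_comm]
  have e2 : ∀ a, (∑ j, ∑ b, (U a j * U b j) * (y a * y b)) = y a ^ 2 := by
    intro a
    rw [Finset.sum_comm]
    have e3 : ∀ b, (∑ j, (U a j * U b j) * (y a * y b))
        = (if a = b then 1 else 0) * (y a * y b) := by
      intro b
      rw [← row_orthonormal hM a b, Finset.sum_mul]
    simp only [e3, ite_mul, one_mul, zero_mul, Finset.sum_ite_eq, Finset.sum_ite_eq',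
      Finset.mem_univ, if_true]
    ring
  simp only [e2]

end spectral

lemma second_moment_bound {Ω : Type} [MeasurableSpace Ω] {μ : Measure Ω} [IsProbabilityMeasure μ]
    {d : ℕ} (hd : 2 ≤ d) {Y : Ω → Fin d → ℝ} (hY : Measurable Y)
    {M : Matrix (Fin d) (Fin d) ℝ}
    (hmeanv : ∀ a, ∫ ω, Y ω a ∂μ = 0)
    (hcovv : ∀ a b, ∫ ω, Y ω a * Y ω b ∂μ = M a b)
    {c : ℝ} (hc : 0 < c) (hLB : eigLB M c⁻¹) (hUB : eigUB M c)
    (huncorr : ∀ v₁ v₂ : Fin d → ℝ, v₁ ⬝ᵥ (M *ᵥ v₂) = 0 →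
      IndepFun (fun ω => v₁ ⬝ᵥ Y ω) (fun ω => v₂ ⬝ᵥ Y ω) μ) :
    Integrable (fun ω => (∑ a, Y ω a * Y ω a) - ∑ a, M a a) μ ∧
    (∫ ω, ((∑ a, Y ω a * Y ω a) - ∑ a, M a a) ∂μ = 0) ∧
    Integrable (fun ω => ((∑ a, Y ω a * Y ω a) - ∑ a, M a a) ^ 2) μ ∧
      ∫ ω, ((∑ a, Y ω a * Y ω a) - ∑ a, M a a) ^ 2 ∂μ ≤ 6 * c ^ 2 * d := by
  have hcoordmeas : ∀ a : Fin d, Measurable fun ω => Y ω a :=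
    fun a => (measurable_pi_apply a).comp hY
  -- diagonal entries are positive
  have hMaa : ∀ a, 0 < M a a := by
    intro a
    have h := hLB ((Pi.single a 1 : Fin d → ℝ))
    have h1 : (∑ i, (Pi.single a 1 : Fin d → ℝ) i ^ 2) = 1 := by
      simp [Pi.single_apply]
    have h2 : (Pi.single a 1 : Fin d → ℝ) ⬝ᵥ (M *ᵥ (Pi.single a 1 : Fin d → ℝ)) = M a a := by
      simp [dotProduct, mulVec, Pi.single_apply]
    rw [h1, h2, mul_one] at h
    exact lt_of_lt_of_le (inv_pos.mpr hc) h
  -- coordinates are square integrable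
  have hsq : ∀ a, Integrable (fun ω => Y ω a * Y ω a) μ := by
    intro a
    by_contra h
    have h0 := integral_undef h
    rw [hcovv a a] at h0
    exact absurd h0 (ne_of_gt (hMaa a))
  have hint : ∀ a b, Integrable (fun ω => Y ω a * Y ω b) μ := by
    intro a b
    refine integrable_mul_of_sq (hcoordmeas a).aestronglyMeasurable
      (hcoordmeas b).aestronglyMeasurable ?_ ?_
    · exact (hsq a).congr (ae_of_all _ fun ω => (sq (Y ω a)).symm)
    · exact (hsq b).congr (ae_of_all _ fun ω => (sq (Y ω b)).symm)
  -- M is symmetric / hermitian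
  have hHerm : M.IsHermitian := by
    refine Matrix.ext fun a b => ?_
    rw [Matrix.conjTranspose_apply, star_trivial, ← hcovv b a, ← hcovv a b]
    congr 1; funext ω; ring
  set U := (hHerm.eigenvectorUnitary : Matrix (Fin d) (Fin d) ℝ) with hU
  set lam := hHerm.eigenvalues with hlam
  set col : Fin d → Fin d → ℝ := fun j a => U a j with hcol
  set Z : Fin d → Ω → ℝ := fun j ω => col j ⬝ᵥ Y ω with hZ
  -- unit norm of columns
  have hcolnorm : ∀ j, (∑ a, col j a ^ 2) = 1 := by
    intro j
    have := col_orthonormal hHerm j j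
    rw [if_pos rfl] at this
    rw [← this]
    exact Finset.sum_congr rfl fun a _ => sq (U a j)
  -- eigenvalue bounds
  have hlam_lb : ∀ j, c⁻¹ ≤ lam j := by
    intro j
    have h := hLB (col j)
    rw [hcolnorm j, mul_one] at h
    have h2 := col_quadform hHerm j j
    rw [if_pos rfl] at h2
    calc c⁻¹ ≤ col j ⬝ᵥ (M *ᵥ col j) := h
    _ = lam j := h2
  have hlam_pos : ∀ j, 0 < lam j := fun j => lt_of_lt_of_le (inv_pos.mpr hc) (hlam_lb j)
  have hlam_ub : ∀ j, lam j ≤ c := by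
    intro j
    have h := hUB (col j)
    rw [hcolnorm j, mul_one] at h
    have h2 : col j ⬝ᵥ (M *ᵥ col j) = lam j := by
      have := col_quadform hHerm j j
      rw [if_pos rfl] at this
      exact this
    calc lam j = col j ⬝ᵥ (M *ᵥ col j) := h2.symm
    _ ≤ c := h
  -- basic facts about Z
  have hZmeas : ∀ j, Measurable (Z j) := fun j => dot_meas hY (col j)
  have hZ2int : ∀ j, Integrable (fun ω => Z j ω ^ 2) μ := by
    intro j
    exact (dot_mul_integrable hY hint (col j) (col j)).congr
      (ae_of_all _ fun ω => (sq (Z j ω)).symm)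
  have hZ2mean : ∀ j, ∫ ω, Z j ω ^ 2 ∂μ = lam j := by
    intro j
    have e : ∫ ω, Z j ω ^ 2 ∂μ = ∫ ω, Z j ω * Z j ω ∂μ := by
      congr 1; funext ω; ring
    rw [e, dot_mul_integral hY hint hcovv (col j) (col j)]
    have h2 := col_quadform hHerm j j
    rw [if_pos rfl] at h2
    exact h2
  have hZmean : ∀ j, ∫ ω, Z j ω ∂μ = 0 := fun j => dot_mean hY hint hmeanv (col j)
  -- pairwise independence of distinct Z's
  have hZindep : ∀ j k, j ≠ k → IndepFun (Z j) (Z k) μ := by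
    intro j k hjk
    refine huncorr (col j) (col k) ?_
    have h2 := col_quadform hHerm j k
    rw [if_neg hjk] at h2
    exact h2
  -- quadratic form values in `col`/`lam` notation
  have hquad : ∀ j k, col j ⬝ᵥ (M *ᵥ col k) = if j = k then lam j else 0 := by
    intro j k
    exact col_quadform hHerm j k
  -- fourth moment bound for each Z j
  have hZ4 : ∀ j, Integrable (fun ω => Z j ω ^ 4) μ ∧ ∫ ω, Z j ω ^ 4 ∂μ ≤ 6 * c ^ 2 := by
    intro j
    obtain ⟨k, hjk⟩ : ∃ k : Fin d, j ≠ k := by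
      refine ⟨⟨if j.val = 0 then 1 else 0, by split <;> omega⟩, ?_⟩
      intro h'
      have := congrArg Fin.val h'
      simp only at this
      split at this <;> omega
    have hquad_jj : col j ⬝ᵥ (M *ᵥ col j) = lam j := by rw [hquad, if_pos rfl]
    have hquad_kk : col k ⬝ᵥ (M *ᵥ col k) = lam k := by rw [hquad, if_pos rfl]
    have hquad_jk : col j ⬝ᵥ (M *ᵥ col k) = 0 := by rw [hquad, if_neg hjk]
    have hquad_kj : col k ⬝ᵥ (M *ᵥ col j) = 0 := by rw [hquad, if_neg (Ne.symm hjk)]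
    set t := Real.sqrt (lam j / lam k) with ht
    have ht2 : t ^ 2 = lam j / lam k :=
      Real.sq_sqrt (le_of_lt (div_pos (hlam_pos j) (hlam_pos k)))
    have htt : t * (t * lam k) = lam j := by
      have : t * (t * lam k) = t ^ 2 * lam k := by ring
      rw [this, ht2, div_mul_cancel₀ _ (ne_of_gt (hlam_pos k))]
    set B : Ω → ℝ := fun ω => (t • col k) ⬝ᵥ Y ω with hB
    have hBmeas : Measurable B := dot_meas hY (t • col k)
    have hB2int : Integrable (fun ω => B ω ^ 2) μ :=
      (dot_mul_integrable hY hint (t • col k) (t • col k)).congr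
        (ae_of_all _ fun ω => (sq (B ω)).symm)
    have quadsmul : ∀ (u v : Fin d → ℝ) (r : ℝ), u ⬝ᵥ (M *ᵥ (r • v)) = r * (u ⬝ᵥ (M *ᵥ v)) := by
      intro u v r
      rw [Matrix.mulVec_smul, dotProduct_smul]
      rfl
    have quadsmul' : ∀ (u v : Fin d → ℝ) (r : ℝ), (r • u) ⬝ᵥ (M *ᵥ v) = r * (u ⬝ᵥ (M *ᵥ v)) := by
      intro u v r
      rw [smul_dotProduct]
      rfl
    have hB2mean : ∫ ω, B ω ^ 2 ∂μ = lam j := by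
      have e : ∫ ω, B ω ^ 2 ∂μ = ∫ ω, B ω * B ω ∂μ := by
        congr 1; funext ω; ring
      rw [e, dot_mul_integral hY hint hcovv (t • col k) (t • col k), quadsmul, quadsmul',
        hquad_kk, htt]
    have hBmean : ∫ ω, B ω ∂μ = 0 := dot_mean hY hint hmeanv (t • col k)
    have hAB : IndepFun (Z j) B μ := by
      refine huncorr (col j) (t • col k) ?_
      rw [quadsmul, hquad_jk, mul_zero]
    have hpm : IndepFun (fun ω => Z j ω + B ω) (fun ω => Z j ω - B ω) μ := by
      have horth : (col j + t • col k) ⬝ᵥ (M *ᵥ (col j - t • col k)) = 0 := by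
        rw [Matrix.mulVec_sub, dotProduct_sub, add_dotProduct, add_dotProduct,
          quadsmul, quadsmul', quadsmul', quadsmul, hquad_jj, hquad_jk, hquad_kj, hquad_kk,
          htt]
        ring
      have hind := huncorr _ _ horth
      have e1 : (fun ω => (col j + t • col k) ⬝ᵥ Y ω) = fun ω => Z j ω + B ω := by
        funext ω; rw [add_dotProduct]
      have e2 : (fun ω => (col j - t • col k) ⬝ᵥ Y ω) = fun ω => Z j ω - B ω := by
        funext ω; rw [sub_dotProduct]
      rwa [e1, e2] at hind
    have h4 := fourth_moment_bound (hZmeas j).aestronglyMeasurable hBmeas.aestronglyMeasurable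
      (hZ2int j) hB2int (hZmean j) hBmean (hZ2mean j) hB2mean hAB hpm
    refine ⟨h4.1, le_trans h4.2 ?_⟩
    have h5 := hlam_ub j
    have h6 := hlam_pos j
    nlinarith
  -- the centered summands
  set R : Fin d → Ω → ℝ := fun j ω => Z j ω ^ 2 - lam j with hR
  have hRint : ∀ j, Integrable (R j) μ := fun j => (hZ2int j).sub (integrable_const _)
  have hRmean : ∀ j, ∫ ω, R j ω ∂μ = 0 := by
    intro j
    rw [hR]
    simp only
    rw [integral_sub (hZ2int j) (integrable_const _), hZ2mean, integral_const]
    simp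
  have hRindep : ∀ j k, j ≠ k → IndepFun (R j) (R k) μ := by
    intro j k hjk
    have := (hZindep j k hjk).comp (φ := fun x : ℝ => x ^ 2 - lam j)
      (ψ := fun x : ℝ => x ^ 2 - lam k)
      ((measurable_id.pow_const 2).sub measurable_const)
      ((measurable_id.pow_const 2).sub measurable_const)
    exact this
  have hRRint : ∀ j k, Integrable (fun ω => R j ω * R k ω) μ := by
    intro j k
    by_cases hjk : j = k
    · subst hjk
      have e : (fun ω => R j ω * R j ω)
          = fun ω => (Z j ω ^ 4 - (2 * lam j) * Z j ω ^ 2) + lam j ^ 2 := by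
        funext ω; rw [hR]; simp only; ring
      rw [e]
      exact (((hZ4 j).1.sub ((hZ2int j).const_mul _)).add (integrable_const _))
    · have := (hRindep j k hjk).integrable_mul (hRint j) (hRint k)
      exact this
  have hRRoff : ∀ j k, j ≠ k → ∫ ω, R j ω * R k ω ∂μ = 0 := by
    intro j k hjk
    have := (hRindep j k hjk).integral_fun_mul_eq_mul_integral (hRint j).aestronglyMeasurable
      (hRint k).aestronglyMeasurable
    rw [this, hRmean j, hRmean k, mul_zero]
  have hRRdiag : ∀ j, ∫ ω, R j ω * R j ω ∂μ ≤ 6 * c ^ 2 := by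
    intro j
    have e : ∫ ω, R j ω * R j ω ∂μ
        = ∫ ω, ((Z j ω ^ 4 - (2 * lam j) * Z j ω ^ 2) + lam j ^ 2) ∂μ := by
      congr 1; funext ω; rw [hR]; simp only; ring
    have hint1 : Integrable (fun ω => Z j ω ^ 4 - (2 * lam j) * Z j ω ^ 2) μ :=
      (hZ4 j).1.sub ((hZ2int j).const_mul _)
    have hint2 : Integrable (fun ω => (2 * lam j) * Z j ω ^ 2) μ := (hZ2int j).const_mul _
    rw [e, integral_add hint1 (integrable_const _),
      integral_sub (hZ4 j).1 hint2, integral_const_mul, hZ2mean,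
      integral_const]
    simp only [measure_univ, probReal_univ, ENNReal.toReal_one, smul_eq_mul, one_mul]
    have h4 := (hZ4 j).2
    have h6 := hlam_pos j
    nlinarith
  -- identify the quantity with ∑ j R j
  have hGeq : (fun ω => ((∑ a, Y ω a * Y ω a) - ∑ a, M a a)) = fun ω => ∑ j, R j ω := by
    funext ω
    have h1 : (∑ a, Y ω a * Y ω a) = ∑ a, (Y ω a) ^ 2 :=
      Finset.sum_congr rfl fun a _ => (sq (Y ω a)).symm
    have h2 : (∑ a, (Y ω a) ^ 2) = ∑ j, Z j ω ^ 2 := norm_sq_eigen hHerm (Y ω)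
    have h3 : (∑ a, M a a) = ∑ j, lam j := trace_eq_sum_eigs hHerm
    rw [h1, h2, h3, ← Finset.sum_sub_distrib]
  have hGsq : (fun ω => ((∑ a, Y ω a * Y ω a) - ∑ a, M a a) ^ 2)
      = fun ω => ∑ j, ∑ k, R j ω * R k ω := by
    funext ω
    have := congrFun hGeq ω
    rw [sq, this, Finset.sum_mul_sum]
  refine ⟨?_, ?_, ?_, ?_⟩
  · rw [hGeq]
    exact integrable_finset_sum _ fun j _ => hRint j
  · rw [hGeq, integral_finset_sum _ fun j _ => hRint j]
    simp only [hRmean, Finset.sum_const_zero]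
  · rw [hGsq]
    exact integrable_finset_sum _ fun j _ => integrable_finset_sum _ fun k _ => hRRint j k
  · rw [hGsq, integral_finset_sum _ fun j _ => integrable_finset_sum _ fun k _ => hRRint j k]
    have e2 : ∀ j : Fin d, ∫ ω, ∑ k, R j ω * R k ω ∂μ = ∑ k, ∫ ω, R j ω * R k ω ∂μ := by
      intro j
      exact integral_finset_sum _ fun k _ => hRRint j k
    simp only [e2]
    have e3 : ∀ j : Fin d, (∑ k, ∫ ω, R j ω * R k ω ∂μ) = ∫ ω, R j ω * R j ω ∂μ := by
      intro j
      rw [Finset.sum_eq_single j]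
      · intro k _ hkj
        exact hRRoff j k (Ne.symm hkj)
      · intro h; exact absurd (Finset.mem_univ j) h
    rw [Finset.sum_congr rfl fun j _ => e3 j]
    calc (∑ j, ∫ ω, R j ω * R j ω ∂μ) ≤ ∑ _j : Fin d, 6 * c ^ 2 :=
      Finset.sum_le_sum fun j _ => hRRdiag j
    _ = 6 * c ^ 2 * d := by
      rw [Finset.sum_const, Finset.card_univ, Fintype.card_fin, nsmul_eq_mul]
      ring

/-- Trace consistency when uncorrelated linear combinations are independent (in
particular, for multivariate normal predictors): for independent mean-zero sub-Gaussian
predictors with common covariance `Σ_{X*}` whose eigenvalues are bounded above and below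
by positive constants, with `p(n) → ∞`, `p(n)/n → 0`, and such that uncorrelated linear
combinations of each `X_i` are independent, `tr(S_X − Σ_{X*}) → 0` in probability. -/
theorem trace_consistency_of_indep_uncorrelated (p : ℕ → ℕ)
    {Ω : Type} [MeasurableSpace Ω] (μ : Measure Ω) [IsProbabilityMeasure μ]
    (X : (n : ℕ) → Fin n → Ω → Fin (p n) → ℝ)
    (hXmeas : ∀ n i, Measurable (X n i))
    (hindep : ∀ n, iIndepFun (X n) μ)
    (SigX : (n : ℕ) → Matrix (Fin (p n)) (Fin (p n)) ℝ)
    (hmean : ∀ n i a, ∫ ω, X n i ω a ∂μ = 0)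
    (hcov : ∀ n i a b, ∫ ω, X n i ω a * X n i ω b ∂μ = SigX n a b)
    (c : ℝ) (hc : 0 < c)
    (heig : ∀ n, eigLB (SigX n) c⁻¹ ∧ eigUB (SigX n) c)
    (cg : ℝ) (hcg : 0 < cg)
    (hsubg : ∀ (n : ℕ) (i : Fin n) (v : Fin (p n) → ℝ), (∑ a, v a ^ 2) = 1 →
      ∫ ω, Real.exp ((v ⬝ᵥ X n i ω) ^ 2 / cg ^ 2) ∂μ ≤ 2)
    (hpinf : Tendsto p atTop atTop)
    (hpn : Tendsto (fun n => (p n : ℝ) / n) atTop (𝓝 0))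
    (huncorr : ∀ (n : ℕ) (i : Fin n) (v₁ v₂ : Fin (p n) → ℝ),
      v₁ ⬝ᵥ (SigX n *ᵥ v₂) = 0 →
      IndepFun (fun ω => v₁ ⬝ᵥ X n i ω) (fun ω => v₂ ⬝ᵥ X n i ω) μ) :
    ∀ ε > (0 : ℝ), Tendsto
      (fun n => μ {ω | ε ≤
        |∑ a : Fin (p n), ((1 / (n : ℝ)) * (∑ i : Fin n, X n i ω a * X n i ω a)
          - SigX n a a)|})
      atTop (𝓝 0) := by
  intro ε hε
  have key : ∀ n : ℕ, 1 ≤ n → 2 ≤ p n →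
      μ {ω | ε ≤ |∑ a : Fin (p n), ((1 / (n : ℝ)) * (∑ i : Fin n, X n i ω a * X n i ω a)
          - SigX n a a)|}
        ≤ ENNReal.ofReal ((6 * c ^ 2 / ε ^ 2) * (p n / n)) := by
    intro n hn hp2
    -- centered per-observation quantities
    set tr : ℝ := ∑ a, SigX n a a with htr
    set G : Fin n → Ω → ℝ := fun i ω => (∑ a, X n i ω a * X n i ω a) - tr with hG
    have hsm : ∀ i : Fin n, Integrable (G i) μ ∧ (∫ ω, G i ω ∂μ = 0) ∧
        Integrable (fun ω => G i ω ^ 2) μ ∧ ∫ ω, G i ω ^ 2 ∂μ ≤ 6 * c ^ 2 * (p n) := by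
      intro i
      exact second_moment_bound hp2 (hXmeas n i) (hmean n i) (hcov n i) hc
        (heig n).1 (heig n).2 (huncorr n i)
    -- measurability of G i
    have hGmeas : ∀ i, Measurable (G i) := by
      intro i
      apply Measurable.sub _ measurable_const
      exact Finset.measurable_sum _ fun a _ =>
        (((measurable_pi_apply a).comp (hXmeas n i)).mul
          ((measurable_pi_apply a).comp (hXmeas n i)))
    -- independence of G i and G i' for i ≠ i'
    have hGindep : ∀ i i' : Fin n, i ≠ i' → IndepFun (G i) (G i') μ := by
      intro i i' hne
      have hbase : IndepFun (X n i) (X n i') μ := (hindep n).indepFun hne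
      have hφ : Measurable fun x : Fin (p n) → ℝ => (∑ a, x a * x a) - tr := by
        apply Measurable.sub _ measurable_const
        exact Finset.measurable_sum _ fun a _ =>
          ((measurable_pi_apply a).mul (measurable_pi_apply a))
      exact hbase.comp hφ hφ
    -- integrability and values of ∫ G i * G i'
    have hGGint : ∀ i i' : Fin n, Integrable (fun ω => G i ω * G i' ω) μ := by
      intro i i'
      by_cases hne : i = i'
      · subst hne
        exact ((hsm i).2.2.1).congr (ae_of_all _ fun ω => (sq (G i ω)))
      · exact ((hGindep i i' hne).integrable_mul (hsm i).1 (hsm i').1 : _)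
    have hGGoff : ∀ i i' : Fin n, i ≠ i' → ∫ ω, G i ω * G i' ω ∂μ = 0 := by
      intro i i' hne
      rw [(hGindep i i' hne).integral_fun_mul_eq_mul_integral (hGmeas i).aestronglyMeasurable
        (hGmeas i').aestronglyMeasurable, (hsm i).2.1, (hsm i').2.1, mul_zero]
    -- W is the average of the G i
    set W : Ω → ℝ := fun ω => ∑ a : Fin (p n), ((1 / (n : ℝ)) *
      (∑ i : Fin n, X n i ω a * X n i ω a) - SigX n a a) with hWdef
    have hn0 : (n : ℝ) ≠ 0 := Nat.cast_ne_zero.mpr (by omega)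
    have hWeq : W = fun ω => (1 / (n : ℝ)) * ∑ i : Fin n, G i ω := by
      funext ω
      rw [hWdef, hG]
      simp only
      rw [Finset.sum_sub_distrib, ← Finset.mul_sum, Finset.sum_comm,
        Finset.sum_sub_distrib, Finset.sum_const, Finset.card_univ,
        Fintype.card_fin, nsmul_eq_mul, mul_sub, ← mul_assoc,
        one_div, inv_mul_cancel₀ hn0, one_mul]
    -- second moment of ∑ G i
    have hSint : Integrable (fun ω => (∑ i : Fin n, G i ω) ^ 2) μ := by
      have e : (fun ω => (∑ i : Fin n, G i ω) ^ 2)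
          = fun ω => ∑ i : Fin n, ∑ i' : Fin n, G i ω * G i' ω := by
        funext ω; rw [sq, Finset.sum_mul_sum]
      rw [e]
      exact integrable_finset_sum _ fun i _ => integrable_finset_sum _ fun i' _ => hGGint i i'
    have hSval : ∫ ω, (∑ i : Fin n, G i ω) ^ 2 ∂μ ≤ n * (6 * c ^ 2 * (p n)) := by
      have e : (fun ω => (∑ i : Fin n, G i ω) ^ 2)
          = fun ω => ∑ i : Fin n, ∑ i' : Fin n, G i ω * G i' ω := by
        funext ω; rw [sq, Finset.sum_mul_sum]
      rw [e, integral_finset_sum _ fun i _ =>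
        (integrable_finset_sum _ fun i' _ => hGGint i i')]
      have e2 : ∀ i : Fin n, ∫ ω, ∑ i' : Fin n, G i ω * G i' ω ∂μ
          = ∑ i' : Fin n, ∫ ω, G i ω * G i' ω ∂μ :=
        fun i => integral_finset_sum _ fun i' _ => hGGint i i'
      simp only [e2]
      have e3 : ∀ i : Fin n, (∑ i' : Fin n, ∫ ω, G i ω * G i' ω ∂μ)
          = ∫ ω, G i ω * G i ω ∂μ := by
        intro i
        rw [Finset.sum_eq_single i]
        · intro i' _ hne
          exact hGGoff i i' (Ne.symm hne)
        · intro h; exact absurd (Finset.mem_univ i) h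
      rw [Finset.sum_congr rfl fun i _ => e3 i]
      calc (∑ i : Fin n, ∫ ω, G i ω * G i ω ∂μ)
          = ∑ i : Fin n, ∫ ω, G i ω ^ 2 ∂μ := by
            refine Finset.sum_congr rfl fun i _ => ?_
            congr 1; funext ω; rw [sq]
        _ ≤ ∑ _i : Fin n, 6 * c ^ 2 * (p n) := Finset.sum_le_sum fun i _ => (hsm i).2.2.2
        _ = n * (6 * c ^ 2 * (p n)) := by
            rw [Finset.sum_const, Finset.card_univ, Fintype.card_fin, nsmul_eq_mul]
    -- second moment of W
    have hW2int : Integrable (fun ω => W ω ^ 2) μ := by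
      have e : (fun ω => W ω ^ 2)
          = fun ω => (1 / (n : ℝ)) ^ 2 * (∑ i : Fin n, G i ω) ^ 2 := by
        funext ω; rw [hWeq]; ring
      rw [e]
      exact hSint.const_mul _
    have hW2val : ∫ ω, W ω ^ 2 ∂μ ≤ 6 * c ^ 2 * (p n) / n := by
      have e : (fun ω => W ω ^ 2)
          = fun ω => (1 / (n : ℝ)) ^ 2 * (∑ i : Fin n, G i ω) ^ 2 := by
        funext ω; rw [hWeq]; ring
      rw [e, integral_const_mul]
      have h1 : (0:ℝ) < (n : ℝ) := by positivity
      calc (1 / (n : ℝ)) ^ 2 * ∫ ω, (∑ i : Fin n, G i ω) ^ 2 ∂μ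
          ≤ (1 / (n : ℝ)) ^ 2 * (n * (6 * c ^ 2 * (p n))) := by
            apply mul_le_mul_of_nonneg_left hSval (by positivity)
        _ = 6 * c ^ 2 * (p n) / n := by field_simp
    -- Markov's inequality
    have hset : {ω | ε ≤ |W ω|} = {ω | ε ^ 2 ≤ W ω ^ 2} := by
      ext ω
      simp only [Set.mem_setOf_eq]
      constructor
      · intro h
        calc ε ^ 2 ≤ |W ω| ^ 2 := pow_le_pow_left₀ hε.le h 2
          _ = W ω ^ 2 := sq_abs _
      · intro h
        have h2 := Real.sqrt_le_sqrt h
        rwa [Real.sqrt_sq hε.le, Real.sqrt_sq_eq_abs] at h2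
    have hmark := mul_meas_ge_le_integral_of_nonneg
      (ae_of_all μ fun ω => sq_nonneg (W ω)) hW2int (ε ^ 2)
    have hfin : μ {ω | ε ≤ |W ω|} ≠ ⊤ := measure_ne_top μ _
    have htoReal : (μ {ω | ε ≤ |W ω|}).toReal ≤ (6 * c ^ 2 / ε ^ 2) * (p n / n) := by
      have hε2 : (0:ℝ) < ε ^ 2 := by positivity
      rw [hset]
      have h1 : ε ^ 2 * (μ {ω | ε ^ 2 ≤ W ω ^ 2}).toReal ≤ 6 * c ^ 2 * (p n) / n :=
        le_trans hmark hW2val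
      have h2 : (μ {ω | ε ^ 2 ≤ W ω ^ 2}).toReal ≤ (6 * c ^ 2 * (p n) / n) / ε ^ 2 := by
        rw [le_div_iff₀ hε2]
        linarith
      calc (μ {ω | ε ^ 2 ≤ W ω ^ 2}).toReal
          ≤ (6 * c ^ 2 * (p n) / n) / ε ^ 2 := h2
        _ = (6 * c ^ 2 / ε ^ 2) * (p n / n) := by field_simp
    calc μ {ω | ε ≤ |W ω|} = ENNReal.ofReal ((μ {ω | ε ≤ |W ω|}).toReal) :=
          (ENNReal.ofReal_toReal hfin).symm
      _ ≤ ENNReal.ofReal ((6 * c ^ 2 / ε ^ 2) * (p n / n)) :=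
          ENNReal.ofReal_le_ofReal htoReal
  -- conclude by squeezing
  have hev : ∀ᶠ n in atTop,
      μ {ω | ε ≤ |∑ a : Fin (p n), ((1 / (n : ℝ)) * (∑ i : Fin n, X n i ω a * X n i ω a)
          - SigX n a a)|}
        ≤ ENNReal.ofReal ((6 * c ^ 2 / ε ^ 2) * (p n / n)) := by
    filter_upwards [hpinf.eventually_ge_atTop 2, eventually_ge_atTop 1] with n h2 h1
    exact key n h1 h2
  have hbound : Tendsto (fun n => ENNReal.ofReal ((6 * c ^ 2 / ε ^ 2) * ((p n : ℝ) / n)))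
      atTop (𝓝 0) := by
    have h0 : Tendsto (fun n => (6 * c ^ 2 / ε ^ 2) * ((p n : ℝ) / n)) atTop (𝓝 0) := by
      have := hpn.const_mul (6 * c ^ 2 / ε ^ 2)
      simpa using this
    have := ENNReal.tendsto_ofReal h0
    simpa using this
  exact tendsto_of_tendsto_of_tendsto_of_le_of_le' tendsto_const_nhds hbound
    (Eventually.of_forall fun n => zero_le) hev

end
end

section
/- Trace minimization over the Stiefel manifold (Lemma min_trace): Let S ∈ ℝ^{p×p} be symmetric and R = diag(r₁,…,r_k) ∈ ℝ^{k×k} with r₁ ≥ ⋯ ≥ r_k ≥ 0 and k ≤ p. Then the map H ↦ tr(S H R Hᵀ) over the set of semi-orthogonal matrices H ∈ ℝ^{p×k} (HᵀH = I_k) attains its minimum at Ĥ = [v_p, …, v_{p−k+1}], where v_j is a unit eigenvector of S corresponding to its j-th largest eigenvalue λ_j(S); in particular, for every semi-orthogonal H ∈ ℝ^{p×k}, tr(S H R Hᵀ) ≥ Σ_{j=1}^k r_j λ_{p−j+1}(S). -/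
/-!
Expand each column `h` of `H` in the eigenbasis: `hᵀ S h = ∑ᵢ λᵢ (vᵢ ⬝ h)²`. For `m` orthonormal
columns the weights `tᵢ = ∑ⱼ (vᵢ ⬝ hⱼ)²` lie in `[0, 1]` (Bessel) and sum to `m` (Parseval), so
`∑ᵢ λᵢ tᵢ` is at least the sum of the `m` smallest eigenvalues (Ky Fan). Since
`tr (S H R Hᵀ) = ∑ⱼ rⱼ hⱼᵀ S hⱼ` with `r` nonnegative and nonincreasing, Abel summation turns these
bounds on the first `m` columns into the bound on the weighted sum, and `Ĥ` attains it.
-/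

open Matrix

theorem sum_dotProduct_sq_le_of_orthonormal {ι n : Type*} [Fintype ι] [DecidableEq ι] [Fintype n]
    {h : ι → n → ℝ} (hh : ∀ j l, h j ⬝ᵥ h l = if j = l then 1 else 0) (x : n → ℝ) :
    ∑ j, (x ⬝ᵥ h j) ^ 2 ≤ x ⬝ᵥ x := by
  have hon : Orthonormal ℝ fun j => (WithLp.toLp 2 (h j) : EuclideanSpace ℝ n) := by
    rw [orthonormal_iff_ite]
    intro j l
    simpa [EuclideanSpace.inner_toLp_toLp, dotProduct_comm] using hh j l
  have bessel := hon.sum_inner_products_le (WithLp.toLp 2 x) (s := Finset.univ)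
  rw [← real_inner_self_eq_norm_sq] at bessel
  simpa only [EuclideanSpace.inner_toLp_toLp, star_trivial, Real.norm_eq_abs, sq_abs] using bessel

theorem dotProduct_eq_sum_of_orthonormal {n R : Type*} [Fintype n] [DecidableEq n] [CommRing R]
    {v : n → n → R} (hv : ∀ i j, v i ⬝ᵥ v j = if i = j then 1 else 0) (x y : n → R) :
    x ⬝ᵥ y = ∑ i, (v i ⬝ᵥ x) * (v i ⬝ᵥ y) := by
  set V : Matrix n n R := Matrix.of v
  have hVVt : V * Vᵀ = 1 := by
    ext i j
    rw [mul_apply', one_apply]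
    exact hv i j
  have hVtV : Vᵀ * V = 1 := mul_eq_one_comm.mp hVVt
  calc x ⬝ᵥ y = (V *ᵥ x) ⬝ᵥ (V *ᵥ y) := by
        rw [dotProduct_mulVec, ← vecMul_transpose, vecMul_vecMul, hVtV, vecMul_one]
    _ = ∑ i, (v i ⬝ᵥ x) * (v i ⬝ᵥ y) := rfl

theorem trace_mul_diagonal_mul_transpose {n k R : Type*} [Fintype n] [Fintype k] [DecidableEq k]
    [CommSemiring R] (S : Matrix n n R) (H : Matrix n k R) (r : k → R) :
    (S * H * diagonal r * Hᵀ).trace = ∑ j, r j * (Hᵀ j ⬝ᵥ (S *ᵥ Hᵀ j)) := by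
  rw [trace_mul_cycle, Matrix.trace]
  refine Finset.sum_congr rfl fun j _ => ?_
  rw [diag_apply, mul_diagonal, mul_comm, mul_apply']
  rfl

theorem transpose_mul_self_eq_one_iff {n k R : Type*} [Fintype n] [DecidableEq k]
    [NonAssocSemiring R] (H : Matrix n k R) :
    Hᵀ * H = 1 ↔ ∀ j l, Hᵀ j ⬝ᵥ Hᵀ l = if j = l then 1 else 0 := by
  simp only [← Matrix.ext_iff, mul_apply', one_apply]
  rfl

theorem sum_mul_le_sum_mul_of_sum_castLE_le {k : ℕ} {r a b : Fin k → ℝ} (hr : Antitone r)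
    (hr0 : ∀ j, 0 ≤ r j)
    (hab : ∀ m (hm : m ≤ k), ∑ j : Fin m, b (Fin.castLE hm j) ≤ ∑ j : Fin m, a (Fin.castLE hm j)) :
    ∑ j, r j * b j ≤ ∑ j, r j * a j := by
  induction k with
  | zero => simp
  | succ k ih =>
    have split : ∀ c : Fin (k + 1) → ℝ, ∑ j, r j * c j =
        ∑ j : Fin k, (r j.castSucc - r (Fin.last k)) * c j.castSucc +
          r (Fin.last k) * ∑ j, c j := by
      intro c
      simp only [Fin.sum_univ_castSucc, sub_mul, Finset.sum_sub_distrib, mul_add, Finset.mul_sum]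
      ring
    rw [split a, split b]
    gcongr ?_ + ?_
    · refine ih (fun i j hij => sub_le_sub_right (hr (Fin.castSucc_le_castSucc_iff.mpr hij)) _)
        (fun j => sub_nonneg.mpr (hr (Fin.castSucc_lt_last j).le)) fun m hm => ?_
      simpa using hab m (hm.trans k.le_succ)
    · exact mul_le_mul_of_nonneg_left (by simpa using hab (k + 1) le_rfl) (hr0 _)

theorem sum_le_sum_mul_of_threshold {ι : Type*} [Fintype ι] {lam t : ι → ℝ} {T : Finset ι}
    {c : ℝ} (hT : ∀ i ∈ T, lam i ≤ c) (hTc : ∀ i ∉ T, c ≤ lam i) (ht0 : ∀ i, 0 ≤ t i)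
    (ht1 : ∀ i, t i ≤ 1) (hsum : ∑ i, t i = T.card) :
    ∑ i ∈ T, lam i ≤ ∑ i, lam i * t i := by
  classical
  have hcompl : ∑ i ∈ T, (1 - t i) = ∑ i ∈ Tᶜ, t i := by
    have := Finset.sum_add_sum_compl T t
    rw [Finset.sum_sub_distrib, Finset.sum_const, nsmul_one]
    linarith
  calc ∑ i ∈ T, lam i = ∑ i ∈ T, lam i * t i + ∑ i ∈ T, lam i * (1 - t i) := by
        rw [← Finset.sum_add_distrib]; congr! 1 with i; ring
    _ ≤ ∑ i ∈ T, lam i * t i + ∑ i ∈ T, c * (1 - t i) := by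
        gcongr with i hi
        · linarith [ht1 i]
        · exact hT i hi
    _ = ∑ i ∈ T, lam i * t i + ∑ i ∈ Tᶜ, c * t i := by
        rw [← Finset.mul_sum, ← Finset.mul_sum, hcompl]
    _ ≤ ∑ i ∈ T, lam i * t i + ∑ i ∈ Tᶜ, lam i * t i := by
        gcongr with i hi
        · exact ht0 i
        · exact hTc i (Finset.mem_compl.mp hi)
    _ = ∑ i, lam i * t i := Finset.sum_add_sum_compl T _

theorem sum_dotProduct_mulVec_eq_sum_mul_sum_sq {n ι : Type*} [Fintype n] [DecidableEq n]
    [Fintype ι] {S : Matrix n n ℝ} (hS : S.IsSymm) {lam : n → ℝ} {v : n → n → ℝ}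
    (hEig : ∀ i, S *ᵥ v i = lam i • v i)
    (hOrth : ∀ i j, v i ⬝ᵥ v j = if i = j then 1 else 0) (h : ι → n → ℝ) :
    ∑ j, h j ⬝ᵥ (S *ᵥ h j) = ∑ i, lam i * ∑ j, (v i ⬝ᵥ h j) ^ 2 := by
  have hvS : ∀ i w, v i ⬝ᵥ (S *ᵥ w) = lam i * (v i ⬝ᵥ w) := fun i w => by
    rw [dotProduct_mulVec, ← mulVec_transpose, hS, hEig, smul_dotProduct, smul_eq_mul]
  simp only [dotProduct_eq_sum_of_orthonormal hOrth (h _), hvS, Finset.mul_sum]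
  rw [Finset.sum_comm]
  exact Finset.sum_congr rfl fun i _ => Finset.sum_congr rfl fun j _ => by ring

theorem sum_eigenvalues_rev_le_sum_dotProduct_mulVec {p m : ℕ} (hmp : m ≤ p)
    {S : Matrix (Fin p) (Fin p) ℝ} (hS : S.IsSymm) {lam : Fin p → ℝ} {v : Fin p → Fin p → ℝ}
    (hEig : ∀ i, S *ᵥ v i = lam i • v i)
    (hOrth : ∀ i j, v i ⬝ᵥ v j = if i = j then 1 else 0) (hAnti : Antitone lam)
    {h : Fin m → Fin p → ℝ} (hh : ∀ j l, h j ⬝ᵥ h l = if j = l then 1 else 0) :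
    ∑ j : Fin m, lam (Fin.rev (Fin.castLE hmp j)) ≤ ∑ j, h j ⬝ᵥ (S *ᵥ h j) := by
  rcases Nat.eq_zero_or_pos m with rfl | hm
  · simp
  set t : Fin p → ℝ := fun i => ∑ j, (v i ⬝ᵥ h j) ^ 2
  set e : Fin m ↪ Fin p := ⟨fun j => Fin.rev (Fin.castLE hmp j),
    Fin.rev_injective.comp (Fin.castLE_injective hmp)⟩
  have hsum : ∑ i, t i = (Finset.univ.map e).card := by
    simp only [t, Finset.card_map, Finset.card_univ, Fintype.card_fin]
    rw [Finset.sum_comm]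
    simp [sq, ← dotProduct_eq_sum_of_orthonormal hOrth, hh]
  have hlhs : ∑ j : Fin m, lam (Fin.rev (Fin.castLE hmp j)) = ∑ i ∈ Finset.univ.map e, lam i :=
    (Finset.sum_map Finset.univ e lam).symm
  rw [sum_dotProduct_mulVec_eq_sum_mul_sum_sq hS hEig hOrth, hlhs]
  refine sum_le_sum_mul_of_threshold (c := lam ⟨p - m, by omega⟩) ?_ ?_
    (fun i => Finset.sum_nonneg fun j _ => sq_nonneg _) (fun i => ?_) hsum
  · simp only [Finset.mem_map, Finset.mem_univ, true_and]
    rintro _ ⟨j, rfl⟩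
    refine hAnti (Fin.le_iff_val_le_val.mpr ?_)
    simp only [e, Function.Embedding.coeFn_mk, Fin.val_rev, Fin.val_castLE]
    omega
  · intro i hi
    refine hAnti (Fin.le_iff_val_le_val.mpr (show (i : ℕ) ≤ p - m from not_lt.mp fun hlt => hi ?_))
    refine Finset.mem_map.mpr ⟨⟨p - 1 - i, by omega⟩, Finset.mem_univ _, Fin.ext ?_⟩
    simp only [e, Function.Embedding.coeFn_mk, Fin.val_rev, Fin.val_castLE]
    omega
  · simpa [hOrth] using sum_dotProduct_sq_le_of_orthonormal hh (v i)

theorem trace_min_stiefel_general (p k : ℕ) (hkp : k ≤ p)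
    (S : Matrix (Fin p) (Fin p) ℝ) (hS : S.IsSymm)
    (lam : Fin p → ℝ) (v : Fin p → Fin p → ℝ)
    (hEig : ∀ j, S *ᵥ v j = lam j • v j)
    (hOrth : ∀ j l, v j ⬝ᵥ v l = if j = l then (1 : ℝ) else 0)
    (hAnti : ∀ j l : Fin p, j ≤ l → lam l ≤ lam j)
    (rdiag : Fin k → ℝ) (hrAnti : ∀ j l : Fin k, j ≤ l → rdiag l ≤ rdiag j)
    (hrNN : ∀ j, 0 ≤ rdiag j) :
    (Matrix.of fun i (j : Fin k) => v (Fin.rev (Fin.castLE hkp j)) i)ᵀ *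
        (Matrix.of fun i (j : Fin k) => v (Fin.rev (Fin.castLE hkp j)) i) = 1 ∧
    ∀ H : Matrix (Fin p) (Fin k) ℝ, Hᵀ * H = 1 →
      (S * (Matrix.of fun i (j : Fin k) => v (Fin.rev (Fin.castLE hkp j)) i) *
          Matrix.diagonal rdiag *
          (Matrix.of fun i (j : Fin k) => v (Fin.rev (Fin.castLE hkp j)) i)ᵀ).trace ≤
        (S * H * Matrix.diagonal rdiag * Hᵀ).trace ∧
      (∑ j : Fin k, rdiag j * lam (Fin.rev (Fin.castLE hkp j))) ≤
        (S * H * Matrix.diagonal rdiag * Hᵀ).trace := by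
  set Hhat : Matrix (Fin p) (Fin k) ℝ :=
    Matrix.of fun i (j : Fin k) => v (Fin.rev (Fin.castLE hkp j)) i
  have hinj : Function.Injective fun j : Fin k => Fin.rev (Fin.castLE hkp j) :=
    Fin.rev_injective.comp (Fin.castLE_injective hkp)
  have hHhat : Hhatᵀ * Hhat = 1 :=
    (transpose_mul_self_eq_one_iff Hhat).mpr fun j l => (hOrth _ _).trans (by simp [hinj.eq_iff])
  have trace_Hhat : (S * Hhat * diagonal rdiag * Hhatᵀ).trace =
      ∑ j, rdiag j * lam (Fin.rev (Fin.castLE hkp j)) := by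
    rw [trace_mul_diagonal_mul_transpose]
    congr! 2 with j
    show v _ ⬝ᵥ (S *ᵥ v _) = _
    simp [hEig, hOrth]
  refine ⟨hHhat, fun H hH => ?_⟩
  have hcols := (transpose_mul_self_eq_one_iff H).mp hH
  have key : ∑ j, rdiag j * lam (Fin.rev (Fin.castLE hkp j)) ≤
      (S * H * diagonal rdiag * Hᵀ).trace := by
    rw [trace_mul_diagonal_mul_transpose]
    refine sum_mul_le_sum_mul_of_sum_castLE_le hrAnti hrNN fun m hm => ?_
    simpa using sum_eigenvalues_rev_le_sum_dotProduct_mulVec (hm.trans hkp) hS hEig hOrth hAnti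
      (h := fun j => Hᵀ (Fin.castLE hm j)) fun j l => by
        simp [hcols, (Fin.castLE_injective hm).eq_iff]
  exact ⟨trace_Hhat ▸ key, key⟩

/-- Lemma (min_trace): for symmetric `S ∈ ℝ^{p×p}` with eigenvalues `λ 0 ≥ ⋯ ≥ λ (p−1)`
and orthonormal eigenvectors `v 0, …, v (p−1)`, and `R = diag(r₁,…,r_k)` with
`r₁ ≥ ⋯ ≥ r_k ≥ 0`, the map `H ↦ tr(S H R Hᵀ)` over semi-orthogonal `H ∈ ℝ^{p×k}` attains
its minimum at `Ĥ = [v_p, …, v_{p−k+1}]` (columns are eigenvectors for the `k` smallest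
eigenvalues); in particular `tr(S H R Hᵀ) ≥ Σ_{j=1}^k r_j λ_{p−j+1}(S)` for every
semi-orthogonal `H`. -/
theorem trace_min_stiefel (p k : ℕ) (hk : 0 < k) (hkp : k ≤ p)
    (S : Matrix (Fin p) (Fin p) ℝ) (hS : S.IsSymm)
    (lam : Fin p → ℝ) (v : Fin p → Fin p → ℝ)
    (hEig : ∀ j, S *ᵥ v j = lam j • v j)
    (hOrth : ∀ j l, v j ⬝ᵥ v l = if j = l then (1 : ℝ) else 0)
    (hAnti : ∀ j l : Fin p, j ≤ l → lam l ≤ lam j)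
    (rdiag : Fin k → ℝ) (hrAnti : ∀ j l : Fin k, j ≤ l → rdiag l ≤ rdiag j)
    (hrNN : ∀ j, 0 ≤ rdiag j) :
    (Matrix.of fun i (j : Fin k) => v (Fin.rev (Fin.castLE hkp j)) i)ᵀ *
        (Matrix.of fun i (j : Fin k) => v (Fin.rev (Fin.castLE hkp j)) i) = 1 ∧
    ∀ H : Matrix (Fin p) (Fin k) ℝ, Hᵀ * H = 1 →
      (S * (Matrix.of fun i (j : Fin k) => v (Fin.rev (Fin.castLE hkp j)) i) *
          Matrix.diagonal rdiag *
          (Matrix.of fun i (j : Fin k) => v (Fin.rev (Fin.castLE hkp j)) i)ᵀ).trace ≤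
        (S * H * Matrix.diagonal rdiag * Hᵀ).trace ∧
      (∑ j : Fin k, rdiag j * lam (Fin.rev (Fin.castLE hkp j))) ≤
        (S * H * Matrix.diagonal rdiag * Hᵀ).trace :=
  trace_min_stiefel_general p k hkp S hS lam v hEig hOrth hAnti rdiag hrAnti hrNN
end

section
/- Minimization of the marginal objective over spiked precision matrices (Tipping–Bishop step used in the proof of Theorem 1): Let S_X ∈ ℝ^{p×p} be symmetric positive semi-definite with rank greater than k, with eigenvalues λ₁ ≥ ⋯ ≥ λ_p ≥ 0 and corresponding orthonormal eigenvectors v₁,…,v_p. Let Θ_X be the set of symmetric positive definite Ω_X ∈ ℝ^{p×p} such that Ω_X⁻¹ = τ(I_p + UDUᵀ) for some semi-orthogonal U ∈ ℝ^{p×k}, diagonal positive semi-definite D ∈ ℝ^{k×k}, and τ > 0. Then g_{n,2}(Ω_X) = −log det Ω_X + tr(S_X Ω_X) is minimized over Θ_X at Ω̂_X whose inverse Σ̂_X has eigenvectors v₁,…,v_p with corresponding eigenvalues λ₁,…,λ_k, τ̂,…,τ̂, where τ̂ = Σ_{j=k+1}^p λ_j/(p − k); that is, for every Ω_X ∈ Θ_X,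 g_{n,2}(Ω_X) ≥ Σ_{j=1}^k [log λ_j + 1] + (p − k)[log τ̂ + 1]. -/
/-!
Write `S_X = Q Λ Qᵀ` and `Ω_X⁻¹ = τ (I + U diag(d) Uᵀ)`, with the spikes `d` sorted decreasingly
(permute the columns of `U`). Then `-log det Ω_X = p log τ + Σ log (1 + d_i)` and, by a Woodbury
identity, `tr (S_X Ω_X) = τ⁻¹ (tr S_X - Σ b_i u_iᵀ S_X u_i)` with `b_i = d_i / (1 + d_i)`, again
decreasing. Ky Fan's maximum principle bounds the prefix sums of `u_iᵀ S_X u_i` by those of the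
`λ_i`, and Abel summation turns this into `Σ b_i u_iᵀ S_X u_i ≤ Σ b_i λ_i`. What is left splits into
the scalar inequalities `log a + 1 ≤ log x + a / x`: one per spike (`a = λ_i`, `x = τ (1 + d_i)`)
and one for the bulk (`a = τ̂`, `x = τ`), all of which are equalities at `Σ̂_X`.
-/

open Matrix
open scoped BigOperators

noncomputable section

/-- The set Θ_X of spiked precision matrices: symmetric positive definite `Ω_X ∈ ℝ^{p×p}`
with `Ω_X⁻¹ = τ(I_p + U D Uᵀ)` for a semi-orthogonal `U ∈ ℝ^{p×k}`, a diagonal positive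
semi-definite `D` and `τ > 0`. -/
def ThetaX (p k : ℕ) : Set (Matrix (Fin p) (Fin p) ℝ) :=
  {ΩX | ΩX.PosDef ∧
    ∃ (U : Matrix (Fin p) (Fin k) ℝ) (D : Matrix (Fin k) (Fin k) ℝ) (τ : ℝ),
      Uᵀ * U = 1 ∧ D.IsDiag ∧ (∀ i, 0 ≤ D i i) ∧ 0 < τ ∧
      ΩX⁻¹ = τ • (1 + U * D * Uᵀ)}

/-- The marginal objective `g_{n,2}(Ω_X) = −log det Ω_X + tr(S_X Ω_X)`. -/
noncomputable def gMarg {p : ℕ} (SX ΩX : Matrix (Fin p) (Fin p) ℝ) : ℝ :=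
  -Real.log ΩX.det + (SX * ΩX).trace

open Finset

lemma Real.log_add_one_le_log_add_div {a x : ℝ} (ha : 0 < a) (hx : 0 < x) :
    Real.log a + 1 ≤ Real.log x + a / x := by
  have h := Real.log_le_sub_one_of_pos (div_pos ha hx)
  rw [Real.log_div ha.ne' hx.ne'] at h
  linarith

lemma Fin.sum_ite_val_lt {M : Type*} [AddCommMonoid M] {m p : ℕ} (h : m ≤ p) (f : Fin p → M) :
    ∑ j : Fin p, (if (j : ℕ) < m then f j else 0) = ∑ i : Fin m, f (Fin.castLE h i) := by
  rw [← Finset.sum_filter]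
  refine (Finset.sum_bij (fun i _ => Fin.castLE h i) (fun i _ => by simp) ?_ ?_ ?_).symm
  · exact fun i _ i' _ hii' => Fin.castLE_injective h hii'
  · exact fun j hj => ⟨⟨j, by simpa using hj⟩, mem_univ _, rfl⟩
  · exact fun _ _ => rfl

lemma Fin.sum_eq_sum_castLE_add_sum_ite_le {M : Type*} [AddCommMonoid M] {k p : ℕ} (h : k ≤ p)
    (f : Fin p → M) :
    ∑ j, f j = ∑ i : Fin k, f (Fin.castLE h i) + ∑ j : Fin p, if k ≤ (j : ℕ) then f j else 0 := by
  rw [← Fin.sum_ite_val_lt h, ← sum_add_distrib]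
  refine sum_congr rfl fun j _ => ?_
  by_cases hj : (j : ℕ) < k
  · simp [hj, not_le.mpr hj]
  · simp [hj, not_lt.mp hj]

lemma Fin.sum_ite_le_val_const {k p : ℕ} (hkp : k ≤ p) (c : ℝ) :
    ∑ j : Fin p, (if k ≤ (j : ℕ) then c else 0) = (p - k) * c := by
  have h := Fin.sum_eq_sum_castLE_add_sum_ite_le hkp fun _ => c
  simp only [sum_const, nsmul_eq_mul] at h
  linarith

lemma sum_mul_le_sum_mul_of_prefix_sums_le {k : ℕ} {b s l : Fin k → ℝ} (hb : Antitone b)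
    (hb0 : ∀ i, 0 ≤ b i)
    (hsl : ∀ m (hm : m ≤ k),
      ∑ i : Fin m, s (Fin.castLE hm i) ≤ ∑ i : Fin m, l (Fin.castLE hm i)) :
    ∑ i, b i * s i ≤ ∑ i, b i * l i := by
  let pad : (Fin k → ℝ) → ℕ → ℝ := fun f n => if h : n < k then f ⟨n, h⟩ else 0
  have pad_val : ∀ f (i : Fin k), pad f i = f i := fun f i => dif_pos i.isLt
  have hD : ∀ m ≤ k, ∑ n ∈ range m, pad (s - l) n ≤ 0 := fun m hm => by
    have hterm : ∀ i : Fin m, pad (s - l) i = s (Fin.castLE hm i) - l (Fin.castLE hm i) :=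
      fun i => dif_pos (lt_of_lt_of_le i.isLt hm)
    rw [← Fin.sum_univ_eq_sum_range, sum_congr rfl fun i _ => hterm i, sum_sub_distrib]
    linarith [hsl m hm]
  have hpad_anti : ∀ n, n + 1 < k → pad b (n + 1) ≤ pad b n := fun n hn => by
    simp only [pad, dif_pos hn, dif_pos (Nat.lt_of_succ_lt hn)]
    exact hb (Fin.mk_le_mk.mpr n.le_succ)
  have hpad_nonneg : ∀ n, 0 ≤ pad b n := fun n => by
    simp only [pad]
    split_ifs
    exacts [hb0 _, le_rfl]
  suffices h : ∑ n ∈ range k, pad b n • pad (s - l) n ≤ 0 by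
    rw [← Fin.sum_univ_eq_sum_range] at h
    simp only [pad_val, smul_eq_mul, Pi.sub_apply, mul_sub, sum_sub_distrib] at h
    linarith
  rw [sum_range_by_parts]
  have hlast := mul_nonpos_of_nonneg_of_nonpos (hpad_nonneg (k - 1)) (hD k le_rfl)
  have hmid : 0 ≤ ∑ n ∈ range (k - 1),
      (pad b (n + 1) - pad b n) • ∑ i ∈ range (n + 1), pad (s - l) i := by
    refine sum_nonneg fun n hn => mul_nonneg_of_nonpos_of_nonpos ?_ (hD _ ?_)
    · exact sub_nonpos.mpr (hpad_anti n (by rw [mem_range] at hn; omega))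
    · rw [mem_range] at hn
      omega
  rw [smul_eq_mul]
  linarith

lemma sum_sq_row_le_one_of_transpose_mul_self_eq_one {m n : Type*} [Fintype m] [Fintype n]
    [DecidableEq m] [DecidableEq n] {G : Matrix m n ℝ} (hG : Gᵀ * G = 1) (j : m) :
    ∑ i, G j i ^ 2 ≤ 1 := by
  set P : Matrix m m ℝ := 1 - G * Gᵀ
  have hP : Pᵀ * P = P := by
    have hGG : G * Gᵀ * (G * Gᵀ) = G * Gᵀ := by
      rw [Matrix.mul_assoc, ← Matrix.mul_assoc Gᵀ, hG, Matrix.one_mul]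
    simp only [P, transpose_sub, transpose_one, transpose_mul, transpose_transpose, sub_mul,
      mul_sub, Matrix.one_mul, Matrix.mul_one, hGG]
    abel
  have hPjj : 0 ≤ P j j := by
    rw [← hP, mul_apply]
    exact sum_nonneg fun l _ => mul_self_nonneg _
  simpa [P, mul_apply, one_apply, sq] using hPjj

lemma sum_sq_col_eq_one_of_transpose_mul_self_eq_one {m n : Type*} [Fintype m]
    [DecidableEq n] {G : Matrix m n ℝ} (hG : Gᵀ * G = 1) (i : n) :
    ∑ j, G j i ^ 2 = 1 := by
  simpa [mul_apply, sq] using congrFun (congrFun hG i) i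

lemma sum_mul_le_sum_castLE_of_weights {p m : ℕ} (hm : m < p) {lam w : Fin p → ℝ}
    (hlam : Antitone lam) (hw0 : ∀ j, 0 ≤ w j) (hw1 : ∀ j, w j ≤ 1) (hw : ∑ j, w j = m) :
    ∑ j, lam j * w j ≤ ∑ i : Fin m, lam (Fin.castLE hm.le i) := by
  set c := lam ⟨m, hm⟩
  -- compare each term with `lam m`; the excess weights `w j - [j < m]` sum to zero
  have hterm : ∀ j : Fin p, lam j * w j - (if (j : ℕ) < m then lam j else 0) ≤
      c * (w j - if (j : ℕ) < m then 1 else 0) := fun j => by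
    by_cases hj : (j : ℕ) < m
    · simp only [hj, if_true]
      nlinarith [hlam (show j ≤ ⟨m, hm⟩ from hj.le), hw1 j]
    · simp only [hj, if_false, sub_zero]
      exact mul_le_mul_of_nonneg_right (hlam (show ⟨m, hm⟩ ≤ j from not_lt.mp hj)) (hw0 j)
  have hcount : ∑ j : Fin p, (if (j : ℕ) < m then (1 : ℝ) else 0) = m := by
    simp [Fin.sum_ite_val_lt hm.le]
  have := sum_le_sum fun j (_ : j ∈ univ) => hterm j
  rw [sum_sub_distrib, ← mul_sum, sum_sub_distrib, hw, hcount, sub_self, mul_zero,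
    Fin.sum_ite_val_lt hm.le] at this
  linarith

-- Ky Fan's maximum principle, for a diagonal matrix
lemma trace_transpose_mul_diagonal_mul_le {p m : ℕ} (hm : m < p) {lam : Fin p → ℝ}
    (hlam : Antitone lam) {G : Matrix (Fin p) (Fin m) ℝ} (hG : Gᵀ * G = 1) :
    (Gᵀ * diagonal lam * G).trace ≤ ∑ i : Fin m, lam (Fin.castLE hm.le i) := by
  have htrace : (Gᵀ * diagonal lam * G).trace = ∑ j, lam j * ∑ i, G j i ^ 2 := by
    rw [trace_mul_comm, ← Matrix.mul_assoc]
    simp only [trace, Matrix.diag, mul_diagonal]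
    simp only [mul_apply, transpose_apply, sq, mul_comm (lam _)]
  rw [htrace]
  refine sum_mul_le_sum_castLE_of_weights hm hlam (fun j => sum_nonneg fun i _ => sq_nonneg _)
    (sum_sq_row_le_one_of_transpose_mul_self_eq_one hG) ?_
  rw [sum_comm]
  simp [sum_sq_col_eq_one_of_transpose_mul_self_eq_one hG]

section Conjugation

variable {m n : Type*} [Fintype m] [Fintype n] [DecidableEq n]

lemma conj_diagonal_mul_conj_diagonal {U : Matrix m n ℝ} (hU : Uᵀ * U = 1) (a b : n → ℝ) :
    U * diagonal a * Uᵀ * (U * diagonal b * Uᵀ) = U * diagonal (a * b) * Uᵀ := by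
  rw [Matrix.mul_assoc (U * diagonal a), ← Matrix.mul_assoc Uᵀ, ← Matrix.mul_assoc Uᵀ, hU,
    Matrix.one_mul, ← Matrix.mul_assoc, Matrix.mul_assoc U, diagonal_mul_diagonal]
  rfl

lemma trace_mul_conj_diagonal (S : Matrix m m ℝ) (U : Matrix m n ℝ) (b : n → ℝ) :
    (S * (U * diagonal b * Uᵀ)).trace = ∑ i, b i * (Uᵀ * S * U) i i := by
  rw [← Matrix.mul_assoc, trace_mul_comm,
    show Uᵀ * (S * (U * diagonal b)) = Uᵀ * S * U * diagonal b by simp only [Matrix.mul_assoc]]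
  simp only [trace, Matrix.diag, mul_diagonal, mul_comm (b _)]

lemma inv_conj_diagonal {Q : Matrix n n ℝ} (hQ : Qᵀ * Q = 1) {a : n → ℝ} (ha : ∀ i, a i ≠ 0) :
    (Q * diagonal a * Qᵀ)⁻¹ = Q * diagonal a⁻¹ * Qᵀ := by
  refine inv_eq_right_inv ?_
  rw [conj_diagonal_mul_conj_diagonal hQ,
    show a * a⁻¹ = fun _ => 1 from funext fun i => mul_inv_cancel₀ (ha i),
    diagonal_one, Matrix.mul_one, mul_eq_one_comm.mp hQ]

lemma trace_conj_diagonal {Q : Matrix n n ℝ} (hQ : Qᵀ * Q = 1) (a : n → ℝ) :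
    (Q * diagonal a * Qᵀ).trace = ∑ i, a i := by
  rw [trace_mul_comm, ← Matrix.mul_assoc, hQ, Matrix.one_mul, trace_diagonal]

lemma det_conj_diagonal {Q : Matrix n n ℝ} (hQ : Qᵀ * Q = 1) (a : n → ℝ) :
    (Q * diagonal a * Qᵀ).det = ∏ i, a i := by
  rw [det_mul_comm, ← Matrix.mul_assoc, hQ, Matrix.one_mul, det_diagonal]

lemma det_smul_one_add_conj_diagonal [DecidableEq m] {U : Matrix m n ℝ} (hU : Uᵀ * U = 1) (τ : ℝ)
    (d : n → ℝ) :
    (τ • (1 + U * diagonal d * Uᵀ)).det = τ ^ Fintype.card m * ∏ i, (1 + d i) := by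
  rw [det_smul, Matrix.mul_assoc, det_one_add_mul_comm, Matrix.mul_assoc, hU, Matrix.mul_one,
    ← diagonal_one, diagonal_add, det_diagonal]

lemma inv_smul_one_add_conj_diagonal [DecidableEq m] {U : Matrix m n ℝ} (hU : Uᵀ * U = 1) {τ : ℝ}
    (hτ : τ ≠ 0) {d : n → ℝ} (hd : ∀ i, 1 + d i ≠ 0) :
    (τ • (1 + U * diagonal d * Uᵀ))⁻¹ =
      τ⁻¹ • (1 - U * diagonal (fun i => d i / (1 + d i)) * Uᵀ) := by
  set b : n → ℝ := fun i => d i / (1 + d i)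
  have hb : d - b - d * b = 0 := funext fun i => by
    simp only [b, Pi.sub_apply, Pi.mul_apply, Pi.zero_apply]
    field_simp [hd i]
    ring
  refine inv_eq_right_inv ?_
  rw [smul_mul_smul, mul_inv_cancel₀ hτ, one_smul]
  calc (1 + U * diagonal d * Uᵀ) * (1 - U * diagonal b * Uᵀ)
      = 1 + (U * diagonal d * Uᵀ - U * diagonal b * Uᵀ
          - U * diagonal d * Uᵀ * (U * diagonal b * Uᵀ)) := by noncomm_ring
    _ = 1 + U * diagonal (d - b - d * b) * Uᵀ := by
      rw [conj_diagonal_mul_conj_diagonal hU, ← Matrix.sub_mul, ← Matrix.mul_sub,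
        ← Matrix.sub_mul, ← Matrix.mul_sub, diagonal_sub, diagonal_sub]
      rfl
    _ = 1 := by simp [hb]

end Conjugation

lemma of_mul_transpose_eq_one_of_orthonormal {n : Type*} [Fintype n] [DecidableEq n]
    {v : n → n → ℝ} (hv : ∀ j l, v j ⬝ᵥ v l = if j = l then 1 else 0) :
    of v * (of v)ᵀ = 1 := by
  ext j l
  simpa [mul_apply, one_apply, dotProduct] using hv j l

lemma eq_transpose_mul_diagonal_mul_of_eigenvectors {n : Type*} [Fintype n] [DecidableEq n]
    {S : Matrix n n ℝ} {lam : n → ℝ} {v : n → n → ℝ} (hEig : ∀ j, S *ᵥ v j = lam j • v j)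
    (hv : ∀ j l, v j ⬝ᵥ v l = if j = l then 1 else 0) :
    S = (of v)ᵀ * diagonal lam * of v := by
  have hSV : S * (of v)ᵀ = (of v)ᵀ * diagonal lam := by
    ext i j
    rw [mul_diagonal, mul_apply]
    simpa [mulVec, dotProduct, mul_comm] using congrFun (hEig j) i
  rw [← hSV, Matrix.mul_assoc, mul_eq_one_comm.mp (of_mul_transpose_eq_one_of_orthonormal hv),
    Matrix.mul_one]

lemma sum_smul_vecMulVec_eq {n : Type*} [Fintype n] [DecidableEq n] (v : n → n → ℝ)
    (mu : n → ℝ) : ∑ j, mu j • vecMulVec (v j) (v j) = (of v)ᵀ * diagonal mu * of v := by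
  ext a b
  rw [Matrix.sum_apply, mul_apply]
  simp only [Matrix.smul_apply, vecMulVec_apply, mul_diagonal, transpose_apply, of_apply,
    smul_eq_mul]
  exact sum_congr rfl fun j _ => by ring

lemma exists_le_val_ne_zero_of_lt_rank {p k : ℕ} {Q : Matrix (Fin p) (Fin p) ℝ}
    (hQ : Qᵀ * Q = 1) {lam : Fin p → ℝ} (h : k < (Q * diagonal lam * Qᵀ).rank) :
    ∃ j : Fin p, k ≤ (j : ℕ) ∧ lam j ≠ 0 := by
  rw [rank_mul_eq_left_of_isUnit_det _ _ (isUnit_det_of_right_inverse hQ),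
    rank_mul_eq_right_of_isUnit_det _ _ (isUnit_det_of_left_inverse hQ), rank_diagonal] at h
  by_contra! hzero
  refine h.not_ge (le_of_le_of_eq (Fintype.card_le_of_injective
    (fun j : {j // lam j ≠ 0} => (⟨j.1, not_le.mp fun hj => j.2 (hzero j.1 hj)⟩ : Fin k))
    fun j j' hjj' => ?_) (Fintype.card_fin k))
  exact Subtype.ext (Fin.ext (Fin.mk.inj_iff.mp hjj'))

lemma gMarg_inv {p : ℕ} (S Sig : Matrix (Fin p) (Fin p) ℝ) :
    gMarg S Sig⁻¹ = Real.log Sig.det + (S * Sig⁻¹).trace := by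
  rw [gMarg, det_nonsing_inv, Ring.inverse_eq_inv', Real.log_inv, neg_neg]

lemma gMarg_conj_diagonal_inv {p : ℕ} {Q : Matrix (Fin p) (Fin p) ℝ} (hQ : Qᵀ * Q = 1)
    (lam : Fin p → ℝ) {mu : Fin p → ℝ} (hmu : ∀ j, mu j ≠ 0) :
    gMarg (Q * diagonal lam * Qᵀ) (Q * diagonal mu * Qᵀ)⁻¹ =
      ∑ j, (Real.log (mu j) + lam j / mu j) := by
  rw [gMarg_inv, det_conj_diagonal hQ, Real.log_prod fun j _ => hmu j, inv_conj_diagonal hQ hmu,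
    conj_diagonal_mul_conj_diagonal hQ, trace_conj_diagonal hQ, ← sum_add_distrib]
  rfl

lemma gMarg_inv_spiked {p k : ℕ} (S : Matrix (Fin p) (Fin p) ℝ) {U : Matrix (Fin p) (Fin k) ℝ}
    (hU : Uᵀ * U = 1) {τ : ℝ} (hτ : 0 < τ) {d : Fin k → ℝ} (hd : ∀ i, 0 < 1 + d i) :
    gMarg S (τ • (1 + U * diagonal d * Uᵀ))⁻¹ =
      p * Real.log τ + ∑ i, Real.log (1 + d i) +
        τ⁻¹ * (S.trace - ∑ i, d i / (1 + d i) * (Uᵀ * S * U) i i) := by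
  rw [gMarg_inv, det_smul_one_add_conj_diagonal hU,
    inv_smul_one_add_conj_diagonal hU hτ.ne' fun i => (hd i).ne',
    Real.log_mul (pow_pos hτ _).ne' (prod_pos fun i _ => hd i).ne', Real.log_pow,
    Real.log_prod fun i _ => (hd i).ne', Matrix.mul_smul, trace_smul, Matrix.mul_sub,
    Matrix.mul_one, trace_sub, trace_mul_conj_diagonal, Fintype.card_fin, smul_eq_mul]

lemma trace_transpose_mul_conj_diagonal_mul_le {p m : ℕ} (hm : m < p)
    {Q : Matrix (Fin p) (Fin p) ℝ} (hQ : Qᵀ * Q = 1) {lam : Fin p → ℝ} (hlam : Antitone lam)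
    {V : Matrix (Fin p) (Fin m) ℝ} (hV : Vᵀ * V = 1) :
    (Vᵀ * (Q * diagonal lam * Qᵀ) * V).trace ≤ ∑ i : Fin m, lam (Fin.castLE hm.le i) := by
  have hG : (Qᵀ * V)ᵀ * (Qᵀ * V) = 1 := by
    rw [transpose_mul, transpose_transpose, Matrix.mul_assoc, ← Matrix.mul_assoc Q,
      mul_eq_one_comm.mp hQ, Matrix.one_mul, hV]
  convert trace_transpose_mul_diagonal_mul_le hm hlam hG using 2
  rw [transpose_mul, transpose_transpose]
  simp only [Matrix.mul_assoc]

lemma sum_mul_diag_le_sum_mul_eigenvalues {p k : ℕ} (hkp : k < p)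
    {Q : Matrix (Fin p) (Fin p) ℝ} (hQ : Qᵀ * Q = 1) {lam : Fin p → ℝ} (hlam : Antitone lam)
    {U : Matrix (Fin p) (Fin k) ℝ} (hU : Uᵀ * U = 1) {b : Fin k → ℝ} (hb : Antitone b)
    (hb0 : ∀ i, 0 ≤ b i) :
    ∑ i, b i * (Uᵀ * (Q * diagonal lam * Qᵀ) * U) i i ≤ ∑ i, b i * lam (Fin.castLE hkp.le i) := by
  refine sum_mul_le_sum_mul_of_prefix_sums_le hb hb0 fun m hm => ?_
  set V := U.submatrix id (Fin.castLE hm)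
  have hV : Vᵀ * V = 1 := by
    rw [transpose_submatrix, ← submatrix_mul _ _ _ _ _ Function.bijective_id, hU,
      submatrix_one _ (Fin.castLE_injective hm)]
  have hVSV : Vᵀ * (Q * diagonal lam * Qᵀ) * V =
      (Uᵀ * (Q * diagonal lam * Qᵀ) * U).submatrix (Fin.castLE hm) (Fin.castLE hm) := by
    rw [submatrix_mul _ _ _ id _ Function.bijective_id,
      submatrix_mul _ _ _ id _ Function.bijective_id, transpose_submatrix, submatrix_id_id]
  have := trace_transpose_mul_conj_diagonal_mul_le (hm.trans_lt hkp) hQ hlam hV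
  simpa only [hVSV, trace, Matrix.diag, submatrix_apply, Fin.castLE_castLE] using this

lemma le_gMarg_inv_spiked {p k : ℕ} (hkp : k < p) {Q : Matrix (Fin p) (Fin p) ℝ}
    (hQ : Qᵀ * Q = 1) {lam : Fin p → ℝ} (hlam : Antitone lam)
    (hpos : ∀ i : Fin k, 0 < lam (Fin.castLE hkp.le i)) {tauHat : ℝ} (htauHat : 0 < tauHat)
    (htail : ∑ j : Fin p, (if k ≤ (j : ℕ) then lam j else 0) = (p - k) * tauHat)
    {U : Matrix (Fin p) (Fin k) ℝ} (hU : Uᵀ * U = 1) {d : Fin k → ℝ} (hd : Antitone d)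
    (hd0 : ∀ i, 0 ≤ d i) {τ : ℝ} (hτ : 0 < τ) :
    ∑ i : Fin k, (Real.log (lam (Fin.castLE hkp.le i)) + 1) + (p - k) * (Real.log tauHat + 1) ≤
      gMarg (Q * diagonal lam * Qᵀ) (τ • (1 + U * diagonal d * Uᵀ))⁻¹ := by
  have h1d : ∀ i, 0 < 1 + d i := fun i => by linarith [hd0 i]
  set b : Fin k → ℝ := fun i => d i / (1 + d i)
  have hb : Antitone b := fun i j hij => by
    simp only [b]
    rw [div_le_div_iff₀ (h1d j) (h1d i)]
    nlinarith [hd hij]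
  have hb0 : ∀ i, 0 ≤ b i := fun i => div_nonneg (hd0 i) (h1d i).le
  have hspike : ∀ i, Real.log (lam (Fin.castLE hkp.le i)) + 1 ≤ Real.log τ + Real.log (1 + d i) +
      τ⁻¹ * (lam (Fin.castLE hkp.le i) - b i * lam (Fin.castLE hkp.le i)) := fun i => by
    have h := Real.log_add_one_le_log_add_div (hpos i) (mul_pos hτ (h1d i))
    rw [Real.log_mul hτ.ne' (h1d i).ne'] at h
    convert h using 2
    have := (h1d i).ne'
    simp only [b]
    field_simp
    ring
  have hbulk : Real.log tauHat + 1 ≤ Real.log τ + τ⁻¹ * tauHat := by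
    simpa only [div_eq_inv_mul] using Real.log_add_one_le_log_add_div htauHat hτ
  have hspikes := sum_le_sum fun i (_ : i ∈ univ) => hspike i
  have hrearr := mul_le_mul_of_nonneg_left
    (sum_mul_diag_le_sum_mul_eigenvalues hkp hQ hlam hU hb hb0) (inv_nonneg.mpr hτ.le)
  have hpk : (0 : ℝ) ≤ p - k := sub_nonneg.mpr (by exact_mod_cast hkp.le)
  rw [gMarg_inv_spiked _ hU hτ h1d, trace_conj_diagonal hQ,
    Fin.sum_eq_sum_castLE_add_sum_ite_le hkp.le, htail]
  simp only [sum_add_distrib, ← mul_sum, sum_sub_distrib, sum_const, card_univ,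
    Fintype.card_fin, nsmul_eq_mul, mul_one] at hspikes ⊢
  linarith [mul_le_mul_of_nonneg_left hbulk hpk]

lemma exists_antitone_of_mem_ThetaX {p k : ℕ} {ΩX : Matrix (Fin p) (Fin p) ℝ}
    (hΩ : ΩX ∈ ThetaX p k) :
    ∃ (U : Matrix (Fin p) (Fin k) ℝ) (d : Fin k → ℝ) (τ : ℝ), Uᵀ * U = 1 ∧ Antitone d ∧
      (∀ i, 0 ≤ d i) ∧ 0 < τ ∧ ΩX = (τ • (1 + U * diagonal d * Uᵀ))⁻¹ := by
  obtain ⟨hpd, U, D, τ, hU, hD, hD0, hτ, hinv⟩ := hΩ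
  -- permuting the columns of `U` sorts the spikes
  let σ : Equiv.Perm (Fin k) := Fin.revPerm.trans (Tuple.sort D.diag)
  refine ⟨U.submatrix id σ, D.diag ∘ σ, τ, ?_,
    fun i j hij => Tuple.monotone_sort D.diag (Fin.rev_le_rev.mpr hij), fun i => hD0 _, hτ, ?_⟩
  · rw [transpose_submatrix, ← submatrix_mul _ _ _ _ _ Function.bijective_id, hU,
      submatrix_one_equiv]
  · rw [← nonsing_inv_nonsing_inv ΩX hpd.det_pos.ne'.isUnit, hinv, ← hD.diagonal_diag]
    congr 3
    ext a b
    simpa [mul_apply, diagonal_apply] using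
      (Equiv.sum_comp σ fun i => U a i * D.diag i * U b i).symm

/-- The spectrum of `Σ̂_X` (with `τ = τ̂`). -/
def spikedSpectrum {p : ℕ} (k : ℕ) (lam : Fin p → ℝ) (τ : ℝ) : Fin p → ℝ :=
  fun j => if (j : ℕ) < k then lam j else τ

lemma conj_diagonal_spikedSpectrum {p k : ℕ} (hkp : k ≤ p) {Q : Matrix (Fin p) (Fin p) ℝ}
    (hQ : Qᵀ * Q = 1) (lam : Fin p → ℝ) {τ : ℝ} (hτ : τ ≠ 0) :
    Q * diagonal (spikedSpectrum k lam τ) * Qᵀ =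
      τ • (1 + Q.submatrix id (Fin.castLE hkp) *
        diagonal (fun i => lam (Fin.castLE hkp i) / τ - 1) * (Q.submatrix id (Fin.castLE hkp))ᵀ) := by
  have hspikes : Q.submatrix id (Fin.castLE hkp) *
      diagonal (fun i => lam (Fin.castLE hkp i) / τ - 1) * (Q.submatrix id (Fin.castLE hkp))ᵀ =
      Q * diagonal (fun j : Fin p => if (j : ℕ) < k then lam j / τ - 1 else 0) * Qᵀ := by
    ext a b
    simp only [mul_apply, diagonal_apply, transpose_apply, submatrix_apply, id, mul_ite, mul_zero,
      sum_ite_eq', mem_univ, if_true, ite_mul, zero_mul]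
    exact (Fin.sum_ite_val_lt hkp fun j => Q a j * (lam j / τ - 1) * Q b j).symm
  have hone : (1 : Matrix (Fin p) (Fin p) ℝ) = Q * diagonal (fun _ => 1) * Qᵀ := by
    rw [diagonal_one, Matrix.mul_one, mul_eq_one_comm.mp hQ]
  rw [hspikes, hone, ← Matrix.add_mul, ← Matrix.mul_add, diagonal_add, ← Matrix.smul_mul,
    ← Matrix.mul_smul, ← diagonal_smul]
  congr 3
  funext j
  simp only [spikedSpectrum, Pi.smul_apply, smul_eq_mul]
  split_ifs
  · field_simp
    ring
  · ring

lemma tail_average_le {p k : ℕ} (hkp : k < p) {lam : Fin p → ℝ} (hlam : Antitone lam) {τ : ℝ}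
    (htail : ∑ j : Fin p, (if k ≤ (j : ℕ) then lam j else 0) = (p - k) * τ) (i : Fin k) :
    τ ≤ lam (Fin.castLE hkp.le i) := by
  have hle : ∑ j : Fin p, (if k ≤ (j : ℕ) then lam j else 0) ≤
      ∑ j : Fin p, (if k ≤ (j : ℕ) then lam ⟨k, hkp⟩ else 0) :=
    sum_le_sum fun j _ => by
      split_ifs with hj
      exacts [hlam (show ⟨k, hkp⟩ ≤ j from hj), le_rfl]
  rw [htail, Fin.sum_ite_le_val_const hkp.le] at hle
  exact (le_of_mul_le_mul_left hle (sub_pos.mpr (by exact_mod_cast hkp))).trans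
    (hlam (show Fin.castLE hkp.le i ≤ ⟨k, hkp⟩ from i.isLt.le))

lemma sum_ite_le_val_pos {p k : ℕ} {lam : Fin p → ℝ} (hlam : ∀ j, 0 ≤ lam j) {j₀ : Fin p}
    (hkj₀ : k ≤ (j₀ : ℕ)) (hj₀ : 0 < lam j₀) :
    0 < ∑ j : Fin p, if k ≤ (j : ℕ) then lam j else 0 :=
  sum_pos' (fun j _ => by split_ifs; exacts [hlam j, le_rfl]) ⟨j₀, mem_univ _, by rwa [if_pos hkj₀]⟩

lemma inv_conj_diagonal_spikedSpectrum_mem_ThetaX {p k : ℕ} (hkp : k ≤ p)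
    {Q : Matrix (Fin p) (Fin p) ℝ} (hQ : Qᵀ * Q = 1) {lam : Fin p → ℝ} {τ : ℝ} (hτ : 0 < τ)
    (hlam : ∀ i : Fin k, τ ≤ lam (Fin.castLE hkp i)) :
    (Q * diagonal (spikedSpectrum k lam τ) * Qᵀ)⁻¹ ∈ ThetaX p k := by
  have hmu : ∀ j, 0 < spikedSpectrum k lam τ j := fun j => by
    unfold spikedSpectrum
    split_ifs with hj
    exacts [hτ.trans_le (hlam ⟨j, hj⟩), hτ]
  have hQt : Function.Injective Qᵀ.mulVec := fun x y hxy => by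
    simpa [mulVec_mulVec, mul_eq_one_comm.mp hQ] using congrArg Q.mulVec hxy
  have hpd : (Q * diagonal (spikedSpectrum k lam τ) * Qᵀ).PosDef := by
    simpa [conjTranspose_eq_transpose_of_trivial] using
      (posDef_diagonal_iff.mpr hmu).conjTranspose_mul_mul_same hQt
  refine ⟨hpd.inv, Q.submatrix id (Fin.castLE hkp), _, τ, ?_, isDiag_diagonal _, fun i => ?_, hτ,
    by rw [nonsing_inv_nonsing_inv _ hpd.det_pos.ne'.isUnit,
      conj_diagonal_spikedSpectrum hkp hQ lam hτ.ne']⟩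
  · rw [transpose_submatrix, ← submatrix_mul _ _ _ _ _ Function.bijective_id, hQ,
      submatrix_one _ (Fin.castLE_injective hkp)]
  · rw [diagonal_apply_eq, sub_nonneg, le_div_iff₀ hτ, one_mul]
    exact hlam i

lemma gMarg_inv_conj_diagonal_spikedSpectrum {p k : ℕ} (hkp : k ≤ p)
    {Q : Matrix (Fin p) (Fin p) ℝ} (hQ : Qᵀ * Q = 1) {lam : Fin p → ℝ}
    (hlam : ∀ i : Fin k, 0 < lam (Fin.castLE hkp i)) {τ : ℝ} (hτ : 0 < τ)
    (htail : ∑ j : Fin p, (if k ≤ (j : ℕ) then lam j else 0) = (p - k) * τ) :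
    gMarg (Q * diagonal lam * Qᵀ) (Q * diagonal (spikedSpectrum k lam τ) * Qᵀ)⁻¹ =
      ∑ i : Fin k, (Real.log (lam (Fin.castLE hkp i)) + 1) + (p - k) * (Real.log τ + 1) := by
  have hmu : ∀ j, spikedSpectrum k lam τ j ≠ 0 := fun j => by
    unfold spikedSpectrum
    split_ifs with hj
    exacts [(hlam ⟨j, hj⟩).ne', hτ.ne']
  have htail' : ∑ j : Fin p, (if k ≤ (j : ℕ) then lam j / τ else 0) = p - k := by
    simp only [div_eq_mul_inv, ← ite_zero_mul, ← sum_mul, htail, mul_inv_cancel_right₀ hτ.ne']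
  have hhead : ∀ i : Fin k, Real.log (spikedSpectrum k lam τ (Fin.castLE hkp i)) +
      lam (Fin.castLE hkp i) / spikedSpectrum k lam τ (Fin.castLE hkp i) =
      Real.log (lam (Fin.castLE hkp i)) + 1 := fun i => by
    rw [spikedSpectrum, if_pos (show (Fin.castLE hkp i : ℕ) < k from i.isLt),
      div_self (hlam i).ne']
  have hbulk : ∀ j : Fin p, (if k ≤ (j : ℕ) then Real.log (spikedSpectrum k lam τ j) +
      lam j / spikedSpectrum k lam τ j else 0) =
      (if k ≤ (j : ℕ) then Real.log τ else 0) + (if k ≤ (j : ℕ) then lam j / τ else 0) := by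
    intro j
    by_cases hj : k ≤ (j : ℕ)
    · simp [spikedSpectrum, hj, not_lt.mpr hj]
    · simp [hj]
  rw [gMarg_conj_diagonal_inv hQ lam hmu, Fin.sum_eq_sum_castLE_add_sum_ite_le hkp,
    sum_congr rfl fun i _ => hhead i, sum_congr rfl fun j _ => hbulk j]
  simp only [sum_add_distrib, Fin.sum_ite_le_val_const hkp, htail']
  ring

theorem gMarg_min_spiked_general (p k : ℕ) (hkp : k ≤ p)
    (SX : Matrix (Fin p) (Fin p) ℝ)
    (hrank : k < SX.rank)
    (lam : Fin p → ℝ) (v : Fin p → Fin p → ℝ)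
    (hEig : ∀ j, SX *ᵥ v j = lam j • v j)
    (hOrth : ∀ j l, v j ⬝ᵥ v l = if j = l then (1 : ℝ) else 0)
    (hAnti : ∀ j l : Fin p, j ≤ l → lam l ≤ lam j) (hNN : ∀ j, 0 ≤ lam j)
    (tauHat : ℝ) (htau : tauHat = (∑ j : Fin p, if k ≤ (j : ℕ) then lam j else 0) / (p - k))
    (SigHat : Matrix (Fin p) (Fin p) ℝ)
    (hSig : SigHat = ∑ j : Fin p,
      (if (j : ℕ) < k then lam j else tauHat) • Matrix.vecMulVec (v j) (v j)) :
    SigHat⁻¹ ∈ ThetaX p k ∧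
    (∀ ΩX ∈ ThetaX p k, gMarg SX SigHat⁻¹ ≤ gMarg SX ΩX) ∧
    gMarg SX SigHat⁻¹ =
      (∑ j : Fin k, (Real.log (lam (Fin.castLE hkp j)) + 1)) +
        (p - k) * (Real.log tauHat + 1) := by
  set Q : Matrix (Fin p) (Fin p) ℝ := (of v)ᵀ
  have hQ : Qᵀ * Q = 1 := by
    rw [transpose_transpose]
    exact of_mul_transpose_eq_one_of_orthonormal hOrth
  have hSX : SX = Q * diagonal lam * Qᵀ := by
    rw [transpose_transpose]
    exact eq_transpose_mul_diagonal_mul_of_eigenvectors hEig hOrth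
  have hSigHat : SigHat = Q * diagonal (spikedSpectrum k lam tauHat) * Qᵀ := by
    rw [hSig, transpose_transpose]
    exact sum_smul_vecMulVec_eq v _
  obtain ⟨j₀, hkj₀, hj₀⟩ := exists_le_val_ne_zero_of_lt_rank hQ (hSX ▸ hrank)
  have hkp' : k < p := hkj₀.trans_lt j₀.isLt
  have hpk : (0 : ℝ) < p - k := sub_pos.mpr (by exact_mod_cast hkp')
  have htail : ∑ j : Fin p, (if k ≤ (j : ℕ) then lam j else 0) = (p - k) * tauHat := by
    rw [htau, mul_div_cancel₀ _ hpk.ne']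
  have hj₀pos : 0 < lam j₀ := (hNN j₀).lt_of_ne' hj₀
  have hpos : ∀ i : Fin k, 0 < lam (Fin.castLE hkp i) := fun i =>
    hj₀pos.trans_le (hAnti _ _ (show Fin.castLE hkp i ≤ j₀ from (i.isLt.trans_le hkj₀).le))
  have htauHat : 0 < tauHat :=
    pos_of_mul_pos_right (htail ▸ sum_ite_le_val_pos hNN hkj₀ hj₀pos) hpk.le
  have hvalue := gMarg_inv_conj_diagonal_spikedSpectrum hkp hQ hpos htauHat htail
  subst hSX hSigHat
  refine ⟨inv_conj_diagonal_spikedSpectrum_mem_ThetaX hkp hQ htauHat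
    (tail_average_le hkp' hAnti htail), fun ΩX hΩ => ?_, hvalue⟩
  obtain ⟨U, d, τ, hU, hd, hd0, hτ, rfl⟩ := exists_antitone_of_mem_ThetaX hΩ
  rw [hvalue]
  exact le_gMarg_inv_spiked hkp' hQ hAnti hpos htauHat htail hU hd hd0 hτ

/-- Tipping–Bishop step: if `S_X` is symmetric positive semi-definite with rank greater
than `k`, eigenvalues `λ 0 ≥ ⋯ ≥ λ (p−1) ≥ 0` and orthonormal eigenvectors `v j`, then
`g_{n,2}` is minimized over Θ_X at `Ω̂_X = Σ̂_X⁻¹`, where `Σ̂_X` has eigenvectors `v j`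
with eigenvalues `λ 0, …, λ (k−1), τ̂, …, τ̂` and `τ̂ = Σ_{j≥k} λ j/(p − k)`; in
particular `g_{n,2}(Ω_X) ≥ Σ_{j<k}(log λ j + 1) + (p − k)(log τ̂ + 1)` for all
`Ω_X ∈ Θ_X`. -/
theorem gMarg_min_spiked (p k : ℕ) (hk : 0 < k) (hkp : k ≤ p)
    (SX : Matrix (Fin p) (Fin p) ℝ) (hsymm : SX.IsSymm) (hpsd : SX.PosSemidef)
    (hrank : k < SX.rank)
    (lam : Fin p → ℝ) (v : Fin p → Fin p → ℝ)
    (hEig : ∀ j, SX *ᵥ v j = lam j • v j)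
    (hOrth : ∀ j l, v j ⬝ᵥ v l = if j = l then (1 : ℝ) else 0)
    (hAnti : ∀ j l : Fin p, j ≤ l → lam l ≤ lam j) (hNN : ∀ j, 0 ≤ lam j)
    (tauHat : ℝ) (htau : tauHat = (∑ j : Fin p, if k ≤ (j : ℕ) then lam j else 0) / (p - k))
    (SigHat : Matrix (Fin p) (Fin p) ℝ)
    (hSig : SigHat = ∑ j : Fin p,
      (if (j : ℕ) < k then lam j else tauHat) • Matrix.vecMulVec (v j) (v j)) :
    SigHat⁻¹ ∈ ThetaX p k ∧
    (∀ ΩX ∈ ThetaX p k, gMarg SX SigHat⁻¹ ≤ gMarg SX ΩX) ∧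
    gMarg SX SigHat⁻¹ =
      (∑ j : Fin k, (Real.log (lam (Fin.castLE hkp j)) + 1)) +
        (p - k) * (Real.log tauHat + 1) :=
  gMarg_min_spiked_general p k hkp SX hrank lam v hEig hOrth hAnti hNN tauHat htau SigHat hSig

end
end

section
/- Closedness of the bounded spiked-model constraint set (key step in the proof of Theorem 1): Fix integers p, r, k with k ≤ p and constants 0 < c₁ ≤ c₂ < ∞. Let B be the set of pairs (β, Ω_X) ∈ ℝ^{p×r} × ℝ^{p×p} such that Ω_X is symmetric positive definite with c₁ ≤ λ_min(Ω_X) and λ_max(Ω_X) ≤ c₂, ‖β‖ ≤ c₂ (spectral norm), and there exist a semi-orthogonal U ∈ ℝ^{p×k}, a diagonal positive semi-definite D ∈ ℝ^{k×k}, τ > 0, and γ ∈ ℝ^{k×r} with Ω_X⁻¹ = τ(I_p + UDUᵀ) and β = Uγ. Then B is a closed (and hence, being bounded, compact) subset of ℝ^{p×r} × ℝ^{p×p}: for any sequence {(β^m, Ω_X^m)} in B converging (in spectral norm, equivalently entrywise) to (β⁰, Ω_X⁰), the limit (β⁰, Ω_X⁰) lies in B. -/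
open Matrix
open scoped BigOperators

noncomputable section

/-- The spectral norm (ℓ²-operator norm) of a real matrix. -/
noncomputable def specNorm {m n : ℕ} (A : Matrix (Fin m) (Fin n) ℝ) : ℝ :=
  ‖LinearMap.toContinuousLinearMap (Matrix.toEuclideanLin A)‖

/-- The bounded spiked-model constraint set `B`: pairs `(β, Ω_X)` with `Ω_X` symmetric
positive definite, `c₁ ≤ λ_min(Ω_X)`, `λ_max(Ω_X) ≤ c₂`, `‖β‖ ≤ c₂`, and
`Ω_X⁻¹ = τ(I_p + U D Uᵀ)`, `β = Uγ` for some semi-orthogonal `U`, diagonal positive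
semi-definite `D`, `τ > 0`, `γ`. -/
def Bset (p r k : ℕ) (c₁ c₂ : ℝ) :
    Set (Matrix (Fin p) (Fin r) ℝ × Matrix (Fin p) (Fin p) ℝ) :=
  {b | b.2.PosDef ∧ eigLB b.2 c₁ ∧ eigUB b.2 c₂ ∧ specNorm b.1 ≤ c₂ ∧
    ∃ (U : Matrix (Fin p) (Fin k) ℝ) (D : Matrix (Fin k) (Fin k) ℝ) (τ : ℝ)
      (γ : Matrix (Fin k) (Fin r) ℝ),
      Uᵀ * U = 1 ∧ D.IsDiag ∧ (∀ i, 0 ≤ D i i) ∧ 0 < τ ∧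
      b.2⁻¹ = τ • (1 + U * D * Uᵀ) ∧ b.1 = U * γ}

/-!
Write `Ω` in spectral form `σ (I - U Uᵀ) + U diag(a) Uᵀ` for semi-orthogonal `U`. Since
`τ (I + U D Uᵀ)` is `τ (I - U Uᵀ) + U diag(τ (1 + D)) Uᵀ`, the conditions defining `B` say that
`Ω` has this form with `c₁ ≤ aᵢ ≤ σ ≤ c₂` (the eigenvalue bounds pin `σ` and the `aᵢ`, the
inequality `aᵢ ≤ σ` is `D ≥ 0`, and `σ` is free when `k = p`), and that `U Uᵀ β = β`. So `B` is a
closed set intersected with the projection of a closed set along the compact parameter space of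
such `(U, σ, a)`, and projecting along a compact factor is a closed map.
-/

namespace Matrix

lemma col_ne_zero_of_transpose_mul_self_eq_one {m n R : Type*} [Fintype m] [Fintype n]
    [DecidableEq n] [Semiring R] [Nontrivial R] {U : Matrix m n R} (hU : Uᵀ * U = 1) (i : n) :
    U.col i ≠ 0 := by
  intro h
  have := congrArg (Uᵀ *ᵥ ·) h
  rw [← mulVec_single_one, mulVec_mulVec, hU, one_mulVec, mulVec_zero] at this
  simpa using congrFun this i

variable {m n R : Type*} [Fintype n] [DecidableEq m] [DecidableEq n] [CommRing R]
  (U : Matrix m n R) (σ τ : R) (a b : n → R)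

/-- For semi-orthogonal `U`, the symmetric matrix with eigenvalue `a i` on the column `U.col i`
and `σ` on the orthogonal complement of the columns. -/
def spikedMatrix : Matrix m m R :=
  σ • (1 - U * Uᵀ) + U * diagonal a * Uᵀ

lemma spikedMatrix_transpose : (spikedMatrix U σ a)ᵀ = spikedMatrix U σ a := by
  simp [spikedMatrix, transpose_mul, Matrix.mul_assoc]

lemma smul_one_add_eq_spikedMatrix (d : n → R) :
    τ • (1 + U * diagonal d * Uᵀ) = spikedMatrix U τ (τ • (1 + d)) := by
  rw [spikedMatrix, diagonal_smul, Matrix.mul_smul, Matrix.smul_mul, ← smul_add,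
    show diagonal (1 + d) = 1 + diagonal d by simp [← diagonal_one, diagonal_add],
    Matrix.mul_add, Matrix.add_mul, Matrix.mul_one, ← add_assoc, sub_add_cancel]

lemma spikedMatrix_one_one : spikedMatrix U 1 1 = 1 := by
  simp [spikedMatrix]

lemma spikedMatrix_eq_of_mul_transpose_eq_one {U : Matrix m n R} (hU : U * Uᵀ = 1) :
    spikedMatrix U σ a = U * diagonal a * Uᵀ := by
  simp [spikedMatrix, hU]

variable [Fintype m]

lemma spikedMatrix_mulVec_of_transpose_mulVec_eq_zero {v : m → R} (hv : Uᵀ *ᵥ v = 0) :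
    spikedMatrix U σ a *ᵥ v = σ • v := by
  simp [spikedMatrix, add_mulVec, smul_mulVec, sub_mulVec, ← mulVec_mulVec, hv]

section SemiOrthogonal

variable {U}

lemma spikedMatrix_mul_self (hU : Uᵀ * U = 1) : spikedMatrix U σ a * U = U * diagonal a := by
  simp [spikedMatrix, Matrix.add_mul, Matrix.sub_mul, Matrix.mul_assoc, hU]

lemma spikedMatrix_mul (hU : Uᵀ * U = 1) :
    spikedMatrix U σ a * spikedMatrix U τ b = spikedMatrix U (σ * τ) (a * b) := by
  have hP : spikedMatrix U σ a * (1 - U * Uᵀ) = σ • (1 - U * Uᵀ) := by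
    rw [Matrix.mul_sub, Matrix.mul_one, ← Matrix.mul_assoc, spikedMatrix_mul_self σ a hU]
    simp [spikedMatrix]
  calc spikedMatrix U σ a * spikedMatrix U τ b
      = τ • (spikedMatrix U σ a * (1 - U * Uᵀ)) + spikedMatrix U σ a * U * diagonal b * Uᵀ := by
        rw [show spikedMatrix U τ b = τ • (1 - U * Uᵀ) + U * diagonal b * Uᵀ from rfl,
          Matrix.mul_add, Matrix.mul_smul, ← Matrix.mul_assoc, ← Matrix.mul_assoc]
    _ = spikedMatrix U (σ * τ) (a * b) := by
        rw [hP, spikedMatrix_mul_self σ a hU, Matrix.mul_assoc U, diagonal_mul_diagonal, smul_smul,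
          mul_comm τ]
        rfl

lemma spikedMatrix_mulVec_col (hU : Uᵀ * U = 1) (i : n) :
    spikedMatrix U σ a *ᵥ U.col i = a i • U.col i := by
  rw [← mulVec_single_one, mulVec_mulVec, spikedMatrix_mul_self σ a hU, ← mulVec_mulVec,
    diagonal_mulVec_single, ← mulVec_smul, ← Pi.single_smul, smul_eq_mul, mul_one]

end SemiOrthogonal

lemma inv_spikedMatrix {K : Type*} [Field K] {U : Matrix m n K} (hU : Uᵀ * U = 1) {σ : K}
    {a : n → K} (hσ : σ ≠ 0) (ha : ∀ i, a i ≠ 0) :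
    (spikedMatrix U σ a)⁻¹ = spikedMatrix U σ⁻¹ a⁻¹ := by
  refine inv_eq_right_inv ?_
  rw [spikedMatrix_mul _ _ _ _ hU, mul_inv_cancel₀ hσ,
    show a * a⁻¹ = 1 from funext fun i => mul_inv_cancel₀ (ha i), spikedMatrix_one_one]

end Matrix

section QuadraticFormBounds

variable {d : ℕ} {M : Matrix (Fin d) (Fin d) ℝ} {c μ : ℝ} {v : Fin d → ℝ}

lemma sum_sq_pos_of_ne_zero (hv : v ≠ 0) : 0 < ∑ i, v i ^ 2 := by
  simpa [dotProduct, sq] using dotProduct_star_self_pos_iff.mpr hv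

lemma dotProduct_mulVec_of_mulVec_eq_smul (hMv : M *ᵥ v = μ • v) :
    v ⬝ᵥ (M *ᵥ v) = μ * ∑ i, v i ^ 2 := by
  simp [hMv, dotProduct, sq, Finset.mul_sum, mul_left_comm]

lemma mem_Icc_of_mulVec_eq_smul {c₁ c₂ : ℝ} (hLB : eigLB M c₁) (hUB : eigUB M c₂) (hv : v ≠ 0)
    (hMv : M *ᵥ v = μ • v) : μ ∈ Set.Icc c₁ c₂ := by
  have hq := dotProduct_mulVec_of_mulVec_eq_smul hMv
  have hpos := sum_sq_pos_of_ne_zero hv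
  exact ⟨le_of_mul_le_mul_right (hq ▸ hLB v) hpos, le_of_mul_le_mul_right (hq ▸ hUB v) hpos⟩

lemma eigLB.posDef (h : eigLB M c) (hM : M.IsHermitian) (hc : 0 < c) : M.PosDef :=
  .of_dotProduct_mulVec_pos hM fun v hv => by
    simpa using (mul_pos hc (sum_sq_pos_of_ne_zero hv)).trans_le (h v)

variable (c)

lemma isClosed_setOf_eigLB : IsClosed {M : Matrix (Fin d) (Fin d) ℝ | eigLB M c} := by
  simp only [eigLB, Set.ofPred_forall]
  exact isClosed_iInter fun v => isClosed_le continuous_const (by fun_prop)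

lemma isClosed_setOf_eigUB : IsClosed {M : Matrix (Fin d) (Fin d) ℝ | eigUB M c} := by
  simp only [eigUB, Set.ofPred_forall]
  exact isClosed_iInter fun v => isClosed_le (by fun_prop) continuous_const

end QuadraticFormBounds

lemma Matrix.exists_mulVec_eq_zero_of_card_lt {m n K : Type*} [Fintype m] [Fintype n] [Field K]
    (A : Matrix m n K) (h : Fintype.card m < Fintype.card n) : ∃ v ≠ 0, A *ᵥ v = 0 := by
  have hker : LinearMap.ker A.mulVecLin ≠ ⊥ :=
    LinearMap.ker_ne_bot_of_finrank_lt (by simpa using h)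
  obtain ⟨v, hv, hv0⟩ := (Submodule.ne_bot_iff _).mp hker
  exact ⟨v, hv0, hv⟩

lemma IsCompact.isClosed_setOf_exists {X Y : Type*} [TopologicalSpace X] [TopologicalSpace Y]
    {K : Set Y} (hK : IsCompact K) {R : X → Y → Prop}
    (hR : IsClosed {z : X × Y | R z.1 z.2}) : IsClosed {x | ∃ y ∈ K, R x y} := by
  have : CompactSpace K := isCompact_iff_compactSpace.mp hK
  have hR' : IsClosed {z : X × K | R z.1 z.2} :=
    hR.preimage (continuous_fst.prodMk (continuous_subtype_val.comp continuous_snd))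
  convert isClosedMap_fst_of_compactSpace _ hR' using 1
  ext x
  simp

lemma continuous_specNorm {m n : ℕ} : Continuous fun A : Matrix (Fin m) (Fin n) ℝ => specNorm A :=
  (LinearMap.continuous_of_finiteDimensional
    (LinearMap.toContinuousLinearMap.toLinearMap.comp
      (Matrix.toEuclideanLin (𝕜 := ℝ) (m := Fin m) (n := Fin n)).toLinearMap)).norm

lemma isCompact_setOf_transpose_mul_self_eq_one {m n : Type*} [Fintype m] [Fintype n]
    [DecidableEq n] : IsCompact {U : Matrix m n ℝ | Uᵀ * U = 1} := by
  have hbox : IsCompact (Set.univ.pi fun _ : m => Set.univ.pi fun _ : n => Set.Icc (-1 : ℝ) 1) :=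
    isCompact_univ_pi fun _ => isCompact_univ_pi fun _ => isCompact_Icc
  have hclosed : IsClosed {U : Matrix m n ℝ | Uᵀ * U = 1} :=
    isClosed_eq (by fun_prop) continuous_const
  refine hbox.of_isClosed_subset hclosed fun (U : Matrix m n ℝ) (hU : Uᵀ * U = 1) i _ j _ => ?_
  have hcol : ∑ l, U l j ^ 2 = 1 := by
    simpa [mul_apply, sq] using congrFun (congrFun hU j) j
  have : U i j ^ 2 ≤ 1 :=
    hcol ▸ Finset.single_le_sum (f := fun l => U l j ^ 2) (fun _ _ => sq_nonneg _)
      (Finset.mem_univ i)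
  exact abs_le.mp (sq_le_one_iff_abs_le_one _ |>.mp this)

def spikeParams (p k : ℕ) (c₁ c₂ : ℝ) : Set (Matrix (Fin p) (Fin k) ℝ × ℝ × (Fin k → ℝ)) :=
  {x | x.1ᵀ * x.1 = 1 ∧ x.2.1 ∈ Set.Icc c₁ c₂ ∧ ∀ i, x.2.2 i ∈ Set.Icc c₁ x.2.1}

lemma isCompact_spikeParams (p k : ℕ) (c₁ c₂ : ℝ) : IsCompact (spikeParams p k c₁ c₂) := by
  have hbox : IsCompact ({U : Matrix (Fin p) (Fin k) ℝ | Uᵀ * U = 1} ×ˢ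
      (Set.Icc c₁ c₂ ×ˢ Set.univ.pi fun _ : Fin k => Set.Icc c₁ c₂)) :=
    isCompact_setOf_transpose_mul_self_eq_one.prod
      (isCompact_Icc.prod (isCompact_univ_pi fun _ => isCompact_Icc))
  have hclosed : IsClosed (spikeParams p k c₁ c₂) := by
    simp only [spikeParams, Set.mem_Icc, Set.ofPred_and, Set.ofPred_forall]
    refine (isClosed_eq (by fun_prop) continuous_const).inter
      ((IsClosed.inter ?_ ?_).inter (isClosed_iInter fun i => .inter ?_ ?_)) <;>
    exact isClosed_le (by fun_prop) (by fun_prop)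
  refine hbox.of_isClosed_subset hclosed fun x ⟨hU, hσ, ha⟩ => ⟨hU, hσ, fun i _ => ?_⟩
  exact ⟨(ha i).1, (ha i).2.trans hσ.2⟩

lemma exists_spikeParams_of_inv_eq {p k : ℕ} (hkp : k ≤ p) {c₁ c₂ : ℝ} (hc₁₂ : c₁ ≤ c₂)
    {Ω : Matrix (Fin p) (Fin p) ℝ} (hΩ : IsUnit Ω.det) (hLB : eigLB Ω c₁) (hUB : eigUB Ω c₂)
    {U : Matrix (Fin p) (Fin k) ℝ} (hU : Uᵀ * U = 1) {τ : ℝ} (hτ : 0 < τ) {d : Fin k → ℝ}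
    (hd : ∀ i, 0 ≤ d i) (hinv : Ω⁻¹ = τ • (1 + U * diagonal d * Uᵀ)) :
    ∃ σ a, (U, σ, a) ∈ spikeParams p k c₁ c₂ ∧ Ω = spikedMatrix U σ a := by
  have hμ : ∀ i, 0 < τ * (1 + d i) := fun i => mul_pos hτ (by linarith [hd i])
  set a : Fin k → ℝ := (τ • (1 + d))⁻¹
  have hΩa : Ω = spikedMatrix U τ⁻¹ a := by
    rw [← nonsing_inv_nonsing_inv Ω hΩ, hinv, smul_one_add_eq_spikedMatrix,
      inv_spikedMatrix hU hτ.ne' (a := τ • (1 + d)) fun i => (hμ i).ne']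
  have ha : ∀ i, a i ∈ Set.Icc c₁ c₂ := fun i =>
    mem_Icc_of_mulVec_eq_smul hLB hUB (col_ne_zero_of_transpose_mul_self_eq_one hU i)
      (hΩa ▸ spikedMatrix_mulVec_col _ _ hU i)
  have haτ : ∀ i, a i ≤ τ⁻¹ := fun i =>
    inv_anti₀ hτ (by simpa using le_mul_of_one_le_right hτ.le (by linarith [hd i]))
  rcases hkp.lt_or_eq with hlt | rfl
  · obtain ⟨v, hv, hUv⟩ := Uᵀ.exists_mulVec_eq_zero_of_card_lt (by simpa using hlt)
    have hτ' := mem_Icc_of_mulVec_eq_smul hLB hUB hv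
      (hΩa ▸ spikedMatrix_mulVec_of_transpose_mulVec_eq_zero _ _ _ hUv)
    exact ⟨τ⁻¹, a, ⟨hU, hτ', fun i => ⟨(ha i).1, haτ i⟩⟩, hΩa⟩
  · -- `U` is orthogonal, so `σ` does not enter and `c₂` will do.
    have hU' : U * Uᵀ = 1 := mul_eq_one_comm.mp hU
    refine ⟨c₂, a, ⟨hU, ⟨hc₁₂, le_rfl⟩, ha⟩, ?_⟩
    rw [hΩa, spikedMatrix_eq_of_mul_transpose_eq_one _ _ hU',
      spikedMatrix_eq_of_mul_transpose_eq_one _ _ hU']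

lemma mem_Bset_of_eq_spikedMatrix {p r k : ℕ} {c₁ c₂ : ℝ} (hc₁ : 0 < c₁)
    {β : Matrix (Fin p) (Fin r) ℝ} {Ω : Matrix (Fin p) (Fin p) ℝ} (hLB : eigLB Ω c₁)
    (hUB : eigUB Ω c₂) (hβ : specNorm β ≤ c₂) {U : Matrix (Fin p) (Fin k) ℝ} {σ : ℝ}
    {a : Fin k → ℝ} (hx : (U, σ, a) ∈ spikeParams p k c₁ c₂) (hΩ : Ω = spikedMatrix U σ a)
    (hβU : U * Uᵀ * β = β) : (β, Ω) ∈ Bset p r k c₁ c₂ := by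
  obtain ⟨hU, hσ, ha⟩ := hx
  have hσ0 : 0 < σ := hc₁.trans_le hσ.1
  have ha0 : ∀ i, 0 < a i := fun i => hc₁.trans_le (ha i).1
  have hsymm : Ω.IsHermitian := by
    rw [isHermitian_iff_isSymm, hΩ]
    exact spikedMatrix_transpose U σ a
  refine ⟨hLB.posDef hsymm hc₁, hLB, hUB, hβ, U, diagonal (σ • a⁻¹ - 1), σ⁻¹, Uᵀ * β, hU,
    isDiag_diagonal _, fun i => ?_, inv_pos.mpr hσ0, ?_, by rw [← Matrix.mul_assoc, hβU]⟩
  · simpa [← div_eq_mul_inv, one_le_div (ha0 i)] using (ha i).2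
  · rw [smul_one_add_eq_spikedMatrix, hΩ, inv_spikedMatrix hU hσ0.ne' fun i => (ha0 i).ne']
    congr 1
    ext i
    simp [hσ0.ne']

lemma Bset_eq {p r k : ℕ} (hkp : k ≤ p) {c₁ c₂ : ℝ} (hc₁ : 0 < c₁) (hc₁₂ : c₁ ≤ c₂) :
    Bset p r k c₁ c₂ = {b | eigLB b.2 c₁ ∧ eigUB b.2 c₂ ∧ specNorm b.1 ≤ c₂} ∩
      {b | ∃ x ∈ spikeParams p k c₁ c₂,
        b.2 = spikedMatrix x.1 x.2.1 x.2.2 ∧ x.1 * x.1ᵀ * b.1 = b.1} := by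
  ext ⟨β, Ω⟩
  constructor
  · rintro ⟨hpd, hLB, hUB, hβ, U, D, τ, γ, hU, hD, hD0, hτ, hinv, rfl⟩
    obtain ⟨σ, a, hx, hΩ⟩ := exists_spikeParams_of_inv_eq hkp hc₁₂ hpd.det_pos.ne'.isUnit hLB hUB
      hU hτ (d := D.diag) hD0 (by rw [hinv, hD.diagonal_diag])
    refine ⟨⟨hLB, hUB, hβ⟩, (U, σ, a), hx, hΩ, ?_⟩
    rw [Matrix.mul_assoc, ← Matrix.mul_assoc Uᵀ, hU, Matrix.one_mul]
  · rintro ⟨⟨hLB, hUB, hβ⟩, ⟨U, σ, a⟩, hx, hΩ, hβU⟩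
    exact mem_Bset_of_eq_spikedMatrix hc₁ hLB hUB hβ hx hΩ hβU

theorem Bset_isClosed_general (p r k : ℕ) (hkp : k ≤ p) (c₁ c₂ : ℝ)
    (hc₁ : 0 < c₁) (hc₁₂ : c₁ ≤ c₂) :
    IsClosed (Bset p r k c₁ c₂) := by
  rw [Bset_eq hkp hc₁ hc₁₂]
  refine .inter ?_ ((isCompact_spikeParams p k c₁ c₂).isClosed_setOf_exists ?_)
  · exact ((isClosed_setOf_eigLB c₁).preimage continuous_snd).inter
      (((isClosed_setOf_eigUB c₂).preimage continuous_snd).inter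
        (isClosed_le (continuous_specNorm.comp continuous_fst) continuous_const))
  · simp only [spikedMatrix, Set.ofPred_and]
    exact (isClosed_eq (by fun_prop) (by fun_prop)).inter (isClosed_eq (by fun_prop) (by fun_prop))

/-- Closedness of the bounded spiked-model constraint set: `B` is a closed subset of
`ℝ^{p×r} × ℝ^{p×p}` (with the entrywise topology, which coincides with the spectral-norm
topology in finite dimensions); being bounded, it is therefore compact. -/
theorem Bset_isClosed (p r k : ℕ) (hk : 0 < k) (hkp : k ≤ p) (c₁ c₂ : ℝ)
    (hc₁ : 0 < c₁) (hc₁₂ : c₁ ≤ c₂) :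
    IsClosed (Bset p r k c₁ c₂) :=
  Bset_isClosed_general p r k hkp c₁ c₂ hc₁ hc₁₂
end
end
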